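/- arXiv:2208.05765 — 9 statements merged into one kernel-verified Lean document; each statement's English description precedes it below -/
import Mathlib

section
/- Let V be a vector space over a field K, and let A and B be complex intuitionistic fuzzy vector subspaces of V (with membership functions λ_A = r_A e^{i2πω_A}, λ_B = r_B e^{i2πω_B} and non-membership functions ρ_A = r̂_A e^{i2πω̂_A}, ρ_B = r̂_B e^{i2πω̂_B}), such that A is homogeneous with B. Then the complex intuitionistic sum A+B, defined by λ_{A+B}(x) = sup_{x=a+b}{r_A(a) ∧ r_B(b)} e^{i2π sup_{x=a+b}{ω_A(a) ∧ ω_B(b)}} and ρ_{A+B}(x) = inf_{x=a+b}{r̂_A(a) ∨ r̂_B(b)} e^{i2π inf_{x=a+b}{ω̂_A(a) ∨ ω̂_B(b)}}, is again a complex intuitionistic fuzzy vector subspace of V. -/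
open scoped Classical

noncomputable section

/-- A complex intuitionistic fuzzy set on `V`, given by membership components
`r, w` (modulus and normalized argument of `λ_A`) and non-membership components
`rh, wh` (modulus and normalized argument of `ρ_A`), all in `[0,1]` with `r + rh ≤ 1`. -/
def IsCIFSet {V : Type*} (r w rh wh : V → ℝ) : Prop :=
  (∀ x, r x ∈ Set.Icc (0:ℝ) 1) ∧ (∀ x, w x ∈ Set.Icc (0:ℝ) 1) ∧
  (∀ x, rh x ∈ Set.Icc (0:ℝ) 1) ∧ (∀ x, wh x ∈ Set.Icc (0:ℝ) 1) ∧
  (∀ x, r x + rh x ≤ 1)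

/-- A CIF vector subspace of a `K`-vector space `V` (order on CIF values is componentwise),
with the paper's standing normalization `λ_A(0) = 1`, `ρ_A(0) = 0`. -/
def IsCIFSub (K : Type*) {V : Type*} [Field K] [AddCommGroup V] [Module K V]
    (r w rh wh : V → ℝ) : Prop :=
  (∀ x y : V, min (r x) (r y) ≤ r (x + y)) ∧
  (∀ x y : V, min (w x) (w y) ≤ w (x + y)) ∧
  (∀ x y : V, rh (x + y) ≤ max (rh x) (rh y)) ∧
  (∀ x y : V, wh (x + y) ≤ max (wh x) (wh y)) ∧
  (∀ (a : K) (x : V), r x ≤ r (a • x)) ∧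
  (∀ (a : K) (x : V), w x ≤ w (a • x)) ∧
  (∀ (a : K) (x : V), rh (a • x) ≤ rh x) ∧
  (∀ (a : K) (x : V), wh (a • x) ≤ wh x) ∧
  r 0 = 1 ∧ w 0 = 1 ∧ rh 0 = 0 ∧ wh 0 = 0

/-- `A` is homogeneous with `B`. -/
def Homog {V W : Type*} (rA wA rhA whA : V → ℝ) (rB wB rhB whB : W → ℝ) : Prop :=
  (∀ x y, rA x ≤ rB y ↔ wA x ≤ wB y) ∧ (∀ x y, rhA x ≤ rhB y ↔ whA x ≤ whB y)

/-- Membership component of the complex intuitionistic sum `A + B`: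
`sup_{x = a + b} (f a ⊓ g b)`. -/
def sumSup {V : Type*} [Add V] (f g : V → ℝ) (x : V) : ℝ :=
  sSup {t | ∃ a b, x = a + b ∧ t = min (f a) (g b)}

/-- Non-membership component of the complex intuitionistic sum `A + B`:
`inf_{x = a + b} (f a ⊔ g b)`. -/
def sumInf {V : Type*} [Add V] (f g : V → ℝ) (x : V) : ℝ :=
  sInf {t | ∃ a b, x = a + b ∧ t = max (f a) (g b)}


lemma min_csSup_le' {A B C : Set ℝ} (hA : A.Nonempty) (hB : B.Nonempty) (hC : BddAbove C)
    (h : ∀ t1 ∈ A, ∀ t2 ∈ B, ∃ t3 ∈ C, min t1 t2 ≤ t3) :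
    min (sSup A) (sSup B) ≤ sSup C := by
  by_contra h'
  push_neg at h'
  rw [lt_min_iff] at h'
  obtain ⟨t1, ht1, ht1'⟩ := exists_lt_of_lt_csSup hA h'.1
  obtain ⟨t2, ht2, ht2'⟩ := exists_lt_of_lt_csSup hB h'.2
  obtain ⟨t3, ht3, ht3'⟩ := h t1 ht1 t2 ht2
  exact absurd (le_csSup hC ht3) (not_le.2 (lt_of_lt_of_le (lt_min ht1' ht2') ht3'))

lemma csInf_le_max' {A B C : Set ℝ} (hA : A.Nonempty) (hB : B.Nonempty) (hC : BddBelow C)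
    (h : ∀ t1 ∈ A, ∀ t2 ∈ B, ∃ t3 ∈ C, t3 ≤ max t1 t2) :
    sInf C ≤ max (sInf A) (sInf B) := by
  by_contra h'
  push_neg at h'
  rw [max_lt_iff] at h'
  obtain ⟨t1, ht1, ht1'⟩ := exists_lt_of_csInf_lt hA h'.1
  obtain ⟨t2, ht2, ht2'⟩ := exists_lt_of_csInf_lt hB h'.2
  obtain ⟨t3, ht3, ht3'⟩ := h t1 ht1 t2 ht2
  exact absurd (csInf_le hC ht3) (not_le.2 (lt_of_le_of_lt ht3' (max_lt ht1' ht2')))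

section sumLemmas
variable {V : Type*} [AddCommGroup V] (f g : V → ℝ)

def supSet' (x : V) : Set ℝ := {t | ∃ a b, x = a + b ∧ t = min (f a) (g b)}
def infSet' (x : V) : Set ℝ := {t | ∃ a b, x = a + b ∧ t = max (f a) (g b)}

lemma supSet'_nonempty (x : V) : (supSet' f g x).Nonempty :=
  ⟨min (f x) (g 0), x, 0, by rw [add_zero], rfl⟩

lemma infSet'_nonempty (x : V) : (infSet' f g x).Nonempty :=
  ⟨max (f x) (g 0), x, 0, by rw [add_zero], rfl⟩

lemma supSet'_bddAbove (hf : ∀ x, f x ≤ 1) (x : V) : BddAbove (supSet' f g x) := by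
  refine ⟨1, ?_⟩
  rintro t ⟨a, b, -, rfl⟩
  exact le_trans (min_le_left _ _) (hf a)

lemma infSet'_bddBelow (hf : ∀ x, 0 ≤ f x) (x : V) : BddBelow (infSet' f g x) := by
  refine ⟨0, ?_⟩
  rintro t ⟨a, b, -, rfl⟩
  exact le_trans (hf a) (le_max_left _ _)

end sumLemmas

section main
variable {K V : Type*} [Field K] [AddCommGroup V] [Module K V]
variable (f g : V → ℝ)

lemma sumSup_eq (x : V) : sumSup f g x = sSup (supSet' f g x) := rfl
lemma sumInf_eq (x : V) : sumInf f g x = sInf (infSet' f g x) := rfl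

lemma sumSup_mem_Icc (hf : ∀ x, f x ∈ Set.Icc (0:ℝ) 1) (hg : ∀ x, g x ∈ Set.Icc (0:ℝ) 1)
    (x : V) : sumSup f g x ∈ Set.Icc (0:ℝ) 1 := by
  constructor
  · refine le_trans (le_min (hf x).1 (hg 0).1)
      (le_csSup (supSet'_bddAbove f g (fun y => (hf y).2) x) ⟨x, 0, by rw [add_zero], rfl⟩)
  · refine csSup_le (supSet'_nonempty f g x) ?_
    rintro t ⟨a, b, -, rfl⟩
    exact le_trans (min_le_left _ _) (hf a).2

lemma sumInf_mem_Icc (hf : ∀ x, f x ∈ Set.Icc (0:ℝ) 1) (hg : ∀ x, g x ∈ Set.Icc (0:ℝ) 1)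
    (x : V) : sumInf f g x ∈ Set.Icc (0:ℝ) 1 := by
  constructor
  · refine le_csInf (infSet'_nonempty f g x) ?_
    rintro t ⟨a, b, -, rfl⟩
    exact le_trans (hf a).1 (le_max_left _ _)
  · refine le_trans (csInf_le (infSet'_bddBelow f g (fun y => (hf y).1) x)
      ⟨x, 0, by rw [add_zero], rfl⟩) (max_le (hf x).2 (hg 0).2)

lemma sumSup_add (hf1 : ∀ x, f x ≤ 1)
    (hf : ∀ x y, min (f x) (f y) ≤ f (x + y)) (hg : ∀ x y, min (g x) (g y) ≤ g (x + y))
    (x y : V) : min (sumSup f g x) (sumSup f g y) ≤ sumSup f g (x + y) := by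
  refine min_csSup_le' (supSet'_nonempty f g x) (supSet'_nonempty f g y)
    (supSet'_bddAbove f g hf1 _) ?_
  rintro t1 ⟨a1, b1, rfl, rfl⟩ t2 ⟨a2, b2, rfl, rfl⟩
  refine ⟨min (f (a1 + a2)) (g (b1 + b2)), ⟨a1 + a2, b1 + b2, add_add_add_comm a1 b1 a2 b2, rfl⟩, ?_⟩
  calc min (min (f a1) (g b1)) (min (f a2) (g b2))
      = min (min (f a1) (f a2)) (min (g b1) (g b2)) := min_min_min_comm _ _ _ _
    _ ≤ min (f (a1 + a2)) (g (b1 + b2)) := min_le_min (hf a1 a2) (hg b1 b2)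

lemma sumInf_add (hf0 : ∀ x, 0 ≤ f x)
    (hf : ∀ x y, f (x + y) ≤ max (f x) (f y)) (hg : ∀ x y, g (x + y) ≤ max (g x) (g y))
    (x y : V) : sumInf f g (x + y) ≤ max (sumInf f g x) (sumInf f g y) := by
  refine csInf_le_max' (infSet'_nonempty f g x) (infSet'_nonempty f g y)
    (infSet'_bddBelow f g hf0 _) ?_
  rintro t1 ⟨a1, b1, rfl, rfl⟩ t2 ⟨a2, b2, rfl, rfl⟩
  refine ⟨max (f (a1 + a2)) (g (b1 + b2)), ⟨a1 + a2, b1 + b2, add_add_add_comm a1 b1 a2 b2, rfl⟩, ?_⟩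
  calc max (f (a1 + a2)) (g (b1 + b2))
      ≤ max (max (f a1) (f a2)) (max (g b1) (g b2)) := max_le_max (hf a1 a2) (hg b1 b2)
    _ = max (max (f a1) (g b1)) (max (f a2) (g b2)) := max_max_max_comm _ _ _ _

lemma sumSup_smul [Module K V] (hf1 : ∀ x, f x ≤ 1)
    (hf : ∀ (α : K) (x : V), f x ≤ f (α • x)) (hg : ∀ (α : K) (x : V), g x ≤ g (α • x))
    (α : K) (x : V) : sumSup f g x ≤ sumSup f g (α • x) := by
  refine csSup_le (supSet'_nonempty f g x) ?_
  rintro t ⟨a, b, rfl, rfl⟩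
  refine le_trans (min_le_min (hf α a) (hg α b))
    (le_csSup (supSet'_bddAbove f g hf1 _) ⟨α • a, α • b, smul_add α a b, rfl⟩)

lemma sumInf_smul [Module K V] (hf0 : ∀ x, 0 ≤ f x)
    (hf : ∀ (α : K) (x : V), f (α • x) ≤ f x) (hg : ∀ (α : K) (x : V), g (α • x) ≤ g x)
    (α : K) (x : V) : sumInf f g (α • x) ≤ sumInf f g x := by
  refine le_csInf (infSet'_nonempty f g x) ?_
  rintro t ⟨a, b, rfl, rfl⟩
  refine le_trans (csInf_le (infSet'_bddBelow f g hf0 _)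
    ⟨α • a, α • b, smul_add α a b, rfl⟩) (max_le_max (hf α a) (hg α b))

lemma sumSup_zero (hf1 : ∀ x, f x ≤ 1) (hg1 : ∀ x, g x ≤ 1)
    (hf0 : f 0 = 1) (hg0 : g 0 = 1) : sumSup f g (0 : V) = 1 := by
  refine le_antisymm (csSup_le (supSet'_nonempty f g 0) ?_) ?_
  · rintro t ⟨a, b, -, rfl⟩
    exact le_trans (min_le_left _ _) (hf1 a)
  · have := le_csSup (supSet'_bddAbove f g hf1 (0:V)) ⟨(0:V), 0, by rw [add_zero], rfl⟩
    rwa [hf0, hg0, min_self] at this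

lemma sumInf_zero (hf0 : ∀ x, 0 ≤ f x) (hg0 : ∀ x, 0 ≤ g x)
    (hf : f 0 = 0) (hg : g 0 = 0) : sumInf f g (0 : V) = 0 := by
  refine le_antisymm ?_ (le_csInf (infSet'_nonempty f g 0) ?_)
  · have := csInf_le (infSet'_bddBelow f g hf0 (0:V)) ⟨(0:V), 0, by rw [add_zero], rfl⟩
    rwa [hf, hg, max_self] at this
  · rintro t ⟨a, b, -, rfl⟩
    exact le_trans (hf0 a) (le_max_left _ _)

end main

lemma sumSup_add_sumInf_le_one {V : Type*} [AddCommGroup V] (rA rB rhA rhB : V → ℝ)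
    (hrhA0 : ∀ x, 0 ≤ rhA x) (hrA1 : ∀ x, rA x ≤ 1)
    (hAle : ∀ x, rA x + rhA x ≤ 1) (hBle : ∀ x, rB x + rhB x ≤ 1) (x : V) :
    sumSup rA rB x + sumInf rhA rhB x ≤ 1 := by
  have key : sumSup rA rB x ≤ 1 - sumInf rhA rhB x := by
    refine csSup_le (supSet'_nonempty rA rB x) ?_
    rintro t ⟨a, b, hx, rfl⟩
    have h1 : sumInf rhA rhB x ≤ max (rhA a) (rhB b) :=
      csInf_le (infSet'_bddBelow rhA rhB hrhA0 x) ⟨a, b, hx, rfl⟩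
    rcases le_total (rhA a) (rhB b) with h | h
    · rw [max_eq_right h] at h1
      have h2 : min (rA a) (rB b) ≤ rB b := min_le_right _ _
      have := hBle b
      linarith
    · rw [max_eq_left h] at h1
      have h2 : min (rA a) (rB b) ≤ rA a := min_le_left _ _
      have := hAle a
      linarith
  linarith

/-- the complex intuitionistic sum of two CIF vector subspaces, one
homogeneous with the other, is again a CIF vector subspace. -/
theorem cif_sum_is_subspace {K V : Type*} [Field K] [AddCommGroup V] [Module K V]
    (rA wA rhA whA rB wB rhB whB : V → ℝ)
    (hASet : IsCIFSet rA wA rhA whA) (hBSet : IsCIFSet rB wB rhB whB)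
    (hA : IsCIFSub K rA wA rhA whA) (hB : IsCIFSub K rB wB rhB whB)
    (hhom : Homog rA wA rhA whA rB wB rhB whB) :
    IsCIFSet (sumSup rA rB) (sumSup wA wB) (sumInf rhA rhB) (sumInf whA whB) ∧
    IsCIFSub K (sumSup rA rB) (sumSup wA wB) (sumInf rhA rhB) (sumInf whA whB) := by
  obtain ⟨hAr, hAw, hArh, hAwh, hAle⟩ := hASet
  obtain ⟨hBr, hBw, hBrh, hBwh, hBle⟩ := hBSet
  obtain ⟨hA1, hA2, hA3, hA4, hA5, hA6, hA7, hA8, hA9, hA10, hA11, hA12⟩ := hA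
  obtain ⟨hB1, hB2, hB3, hB4, hB5, hB6, hB7, hB8, hB9, hB10, hB11, hB12⟩ := hB
  refine ⟨⟨sumSup_mem_Icc rA rB hAr hBr, sumSup_mem_Icc wA wB hAw hBw,
      sumInf_mem_Icc rhA rhB hArh hBrh, sumInf_mem_Icc whA whB hAwh hBwh,
      sumSup_add_sumInf_le_one rA rB rhA rhB (fun x => (hArh x).1) (fun x => (hAr x).2)
        hAle hBle⟩,
    sumSup_add rA rB (fun x => (hAr x).2) hA1 hB1,
    sumSup_add wA wB (fun x => (hAw x).2) hA2 hB2,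
    sumInf_add rhA rhB (fun x => (hArh x).1) hA3 hB3,
    sumInf_add whA whB (fun x => (hAwh x).1) hA4 hB4,
    sumSup_smul rA rB (fun x => (hAr x).2) hA5 hB5,
    sumSup_smul wA wB (fun x => (hAw x).2) hA6 hB6,
    sumInf_smul rhA rhB (fun x => (hArh x).1) hA7 hB7,
    sumInf_smul whA whB (fun x => (hAwh x).1) hA8 hB8,
    sumSup_zero rA rB (fun x => (hAr x).2) (fun x => (hBr x).2) hA9 hB9,
    sumSup_zero wA wB (fun x => (hAw x).2) (fun x => (hBw x).2) hA10 hB10,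
    sumInf_zero rhA rhB (fun x => (hArh x).1) (fun x => (hBrh x).1) hA11 hB11,
    sumInf_zero whA whB (fun x => (hAwh x).1) (fun x => (hBwh x).1) hA12 hB12⟩
end
end

section
/- Let A = (λ_A, ρ_A) be a complex intuitionistic fuzzy vector subspace of a K-vector space V and let α ∈ K. Define αA = (λ_{αA}, ρ_{αA}) by λ_{αA}(x) = λ_A(α⁻¹x) and ρ_{αA}(x) = ρ_A(α⁻¹x) when α ≠ 0, and for α = 0: λ_{0A}(0) = 1, λ_{0A}(x) = 0 for x ≠ 0, ρ_{0A}(0) = 0, ρ_{0A}(x) = 1 for x ≠ 0. Then αA is also a complex intuitionistic fuzzy vector subspace of V. -/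
open scoped Classical

noncomputable section

/-- Membership components of `αA`. -/
def smulMem {K V : Type*} [Field K] [AddCommGroup V] [Module K V]
    (a : K) (f : V → ℝ) (x : V) : ℝ :=
  if a = 0 then (if x = 0 then 1 else 0) else f (a⁻¹ • x)

/-- Non-membership components of `αA`. -/
def smulNon {K V : Type*} [Field K] [AddCommGroup V] [Module K V]
    (a : K) (f : V → ℝ) (x : V) : ℝ :=
  if a = 0 then (if x = 0 then 0 else 1) else f (a⁻¹ • x)

/-- if `A` is a CIF vector subspace of `V` and `α ∈ K`, then `αA` is also a
CIF vector subspace of `V`. -/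
theorem cif_smul_is_subspace {K V : Type*} [Field K] [AddCommGroup V] [Module K V]
    (rA wA rhA whA : V → ℝ)
    (hASet : IsCIFSet rA wA rhA whA) (hA : IsCIFSub K rA wA rhA whA) (a : K) :
    IsCIFSet (smulMem a rA) (smulMem a wA) (smulNon a rhA) (smulNon a whA) ∧
    IsCIFSub K (smulMem a rA) (smulMem a wA) (smulNon a rhA) (smulNon a whA) := by
  obtain ⟨hr, hw, hrh, hwh, hsum⟩ := hASet
  obtain ⟨h1, h2, h3, h4, h5, h6, h7, h8, h9, h10, h11, h12⟩ := hA
  by_cases ha : a = 0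
  · subst ha
    have e1 : ∀ x : V, smulMem (0:K) rA x = (if x = 0 then 1 else 0) := fun _ => if_pos rfl
    have e2 : ∀ x : V, smulMem (0:K) wA x = (if x = 0 then 1 else 0) := fun _ => if_pos rfl
    have e3 : ∀ x : V, smulNon (0:K) rhA x = (if x = 0 then 0 else 1) := fun _ => if_pos rfl
    have e4 : ∀ x : V, smulNon (0:K) whA x = (if x = 0 then 0 else 1) := fun _ => if_pos rfl
    constructor
    · refine ⟨fun x => ?_, fun x => ?_, fun x => ?_, fun x => ?_, fun x => ?_⟩ <;>
        simp only [e1, e2, e3, e4] <;> split_ifs <;> norm_num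
    · clear hr hw hrh hwh hsum h1 h2 h3 h4 h5 h6 h7 h8 h9 h10 h11 h12
      refine ⟨fun x y => ?_, fun x y => ?_, fun x y => ?_, fun x y => ?_,
        fun c x => ?_, fun c x => ?_, fun c x => ?_, fun c x => ?_, ?_, ?_, ?_, ?_⟩ <;>
        simp only [e1, e2, e3, e4] <;> clear e1 e2 e3 e4 <;>
        split_ifs <;> simp_all
  · have e1 : ∀ x : V, smulMem a rA x = rA (a⁻¹ • x) := fun _ => if_neg ha
    have e2 : ∀ x : V, smulMem a wA x = wA (a⁻¹ • x) := fun _ => if_neg ha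
    have e3 : ∀ x : V, smulNon a rhA x = rhA (a⁻¹ • x) := fun _ => if_neg ha
    have e4 : ∀ x : V, smulNon a whA x = whA (a⁻¹ • x) := fun _ => if_neg ha
    constructor
    · exact ⟨fun x => by rw [e1]; exact hr _, fun x => by rw [e2]; exact hw _,
        fun x => by rw [e3]; exact hrh _, fun x => by rw [e4]; exact hwh _,
        fun x => by rw [e1, e3]; exact hsum _⟩
    · refine ⟨fun x y => ?_, fun x y => ?_, fun x y => ?_, fun x y => ?_,
        fun c x => ?_, fun c x => ?_, fun c x => ?_, fun c x => ?_, ?_, ?_, ?_, ?_⟩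
      · simp only [e1, smul_add]; exact h1 _ _
      · simp only [e2, smul_add]; exact h2 _ _
      · simp only [e3, smul_add]; exact h3 _ _
      · simp only [e4, smul_add]; exact h4 _ _
      · simp only [e1, smul_comm a⁻¹ c]; exact h5 c _
      · simp only [e2, smul_comm a⁻¹ c]; exact h6 c _
      · simp only [e3, smul_comm a⁻¹ c]; exact h7 c _
      · simp only [e4, smul_comm a⁻¹ c]; exact h8 c _
      · rw [e1, smul_zero]; exact h9
      · rw [e2, smul_zero]; exact h10
      · rw [e3, smul_zero]; exact h11
      · rw [e4, smul_zero]; exact h12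
end
end

section
/- Let f : V → V' be a linear map between K-vector spaces and let A = (λ_A, ρ_A) be a complex intuitionistic fuzzy vector subspace of V. Then the image f(A) = (λ_{f(A)}, ρ_{f(A)}), defined by λ_{f(A)}(y) = sup{λ_A(x) : x ∈ f⁻¹(y)} for y ∈ f(V) and 0 otherwise, ρ_{f(A)}(y) = inf{ρ_A(x) : x ∈ f⁻¹(y)} for y ∈ f(V) and 1 otherwise, is a complex intuitionistic fuzzy vector subspace of V'. -/
open scoped Classical

noncomputable section

/-- Membership component of the image `f(A)`: `sup` over the fibre on `f(V)`, `0` off it. -/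
def imSupP {V W : Type*} (f : V → W) (g : V → ℝ) (y : W) : ℝ :=
  if ∃ x, f x = y then sSup {t | ∃ x, f x = y ∧ t = g x} else 0

/-- Non-membership component of the image `f(A)`: `inf` over the fibre on `f(V)`, `1` off it. -/
def imInfP {V W : Type*} (f : V → W) (g : V → ℝ) (y : W) : ℝ :=
  if ∃ x, f x = y then sInf {t | ∃ x, f x = y ∧ t = g x} else 1

section AuxCIF

variable {V W : Type*}

lemma imset_bddAbove (f : V → W) (g : V → ℝ) (hb : ∀ x, g x ∈ Set.Icc (0:ℝ) 1) (y : W) :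
    BddAbove {t | ∃ x, f x = y ∧ t = g x} :=
  ⟨1, by rintro t ⟨x, _, rfl⟩; exact (hb x).2⟩

lemma imset_bddBelow (f : V → W) (g : V → ℝ) (hb : ∀ x, g x ∈ Set.Icc (0:ℝ) 1) (y : W) :
    BddBelow {t | ∃ x, f x = y ∧ t = g x} :=
  ⟨0, by rintro t ⟨x, _, rfl⟩; exact (hb x).1⟩

lemma imSupP_mem (f : V → W) (g : V → ℝ) (hb : ∀ x, g x ∈ Set.Icc (0:ℝ) 1) (y : W) :
    imSupP f g y ∈ Set.Icc (0:ℝ) 1 := by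
  unfold imSupP
  split_ifs with h
  · obtain ⟨x, hx⟩ := h
    refine ⟨le_trans (hb x).1 (le_csSup (imset_bddAbove f g hb y) ⟨x, hx, rfl⟩), ?_⟩
    exact csSup_le ⟨g x, x, hx, rfl⟩ (by rintro t ⟨x', _, rfl⟩; exact (hb x').2)
  · simp

lemma imInfP_mem (f : V → W) (g : V → ℝ) (hb : ∀ x, g x ∈ Set.Icc (0:ℝ) 1) (y : W) :
    imInfP f g y ∈ Set.Icc (0:ℝ) 1 := by
  unfold imInfP
  split_ifs with h
  · obtain ⟨x, hx⟩ := h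
    refine ⟨le_csInf ⟨g x, x, hx, rfl⟩ (by rintro t ⟨x', _, rfl⟩; exact (hb x').1), ?_⟩
    exact le_trans (csInf_le (imset_bddBelow f g hb y) ⟨x, hx, rfl⟩) (hb x).2
  · simp

lemma imSup_add_imInf_le (f : V → W) (g g' : V → ℝ)
    (hb : ∀ x, g x ∈ Set.Icc (0:ℝ) 1) (hb' : ∀ x, g' x ∈ Set.Icc (0:ℝ) 1)
    (hsum : ∀ x, g x + g' x ≤ 1) (y : W) :
    imSupP f g y + imInfP f g' y ≤ 1 := by
  unfold imSupP imInfP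
  split_ifs with h
  · obtain ⟨x, hx⟩ := h
    have h1 : sSup {t | ∃ x, f x = y ∧ t = g x} ≤
        1 - sInf {t | ∃ x, f x = y ∧ t = g' x} := by
      refine csSup_le ⟨g x, x, hx, rfl⟩ ?_
      rintro t ⟨x', hx', rfl⟩
      have h2 : sInf {t | ∃ x, f x = y ∧ t = g' x} ≤ g' x' :=
        csInf_le (imset_bddBelow f g' hb' y) ⟨x', hx', rfl⟩
      linarith [hsum x']
    linarith
  · norm_num

section Grp
variable [AddCommGroup V] [AddCommGroup W]

lemma imSupP_add (f : V → W) (hf : ∀ a b, f (a + b) = f a + f b)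
    (g : V → ℝ) (hb : ∀ x, g x ∈ Set.Icc (0:ℝ) 1)
    (hadd : ∀ x y : V, min (g x) (g y) ≤ g (x + y)) (y₁ y₂ : W) :
    min (imSupP f g y₁) (imSupP f g y₂) ≤ imSupP f g (y₁ + y₂) := by
  by_cases h1 : ∃ x, f x = y₁
  · by_cases h2 : ∃ x, f x = y₂
    · by_contra hc
      push_neg at hc
      rw [lt_min_iff] at hc
      have e1 : imSupP f g y₁ = sSup {t | ∃ x, f x = y₁ ∧ t = g x} := if_pos h1
      have e2 : imSupP f g y₂ = sSup {t | ∃ x, f x = y₂ ∧ t = g x} := if_pos h2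
      obtain ⟨x₁, hx₁⟩ := h1
      obtain ⟨x₂, hx₂⟩ := h2
      obtain ⟨t₁, ⟨a₁, ha₁, rfl⟩, ht₁⟩ :=
        exists_lt_of_lt_csSup (⟨g x₁, x₁, hx₁, rfl⟩ :
          {t | ∃ x, f x = y₁ ∧ t = g x}.Nonempty) (e1 ▸ hc.1)
      obtain ⟨t₂, ⟨a₂, ha₂, rfl⟩, ht₂⟩ :=
        exists_lt_of_lt_csSup (⟨g x₂, x₂, hx₂, rfl⟩ :
          {t | ∃ x, f x = y₂ ∧ t = g x}.Nonempty) (e2 ▸ hc.2)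
      have hmem : g (a₁ + a₂) ∈ {t | ∃ x, f x = y₁ + y₂ ∧ t = g x} :=
        ⟨a₁ + a₂, by rw [hf, ha₁, ha₂], rfl⟩
      have h12 : imSupP f g (y₁ + y₂) = sSup {t | ∃ x, f x = y₁ + y₂ ∧ t = g x} :=
        if_pos ⟨a₁ + a₂, by rw [hf, ha₁, ha₂]⟩
      have : g (a₁ + a₂) ≤ imSupP f g (y₁ + y₂) :=
        h12 ▸ le_csSup (imset_bddAbove f g hb _) hmem
      have hlt : min (g a₁) (g a₂) ≤ g (a₁ + a₂) := hadd a₁ a₂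
      rcases min_le_iff.mp hlt with h | h
      · linarith
      · linarith
    · have : imSupP f g y₂ = 0 := if_neg h2
      calc min (imSupP f g y₁) (imSupP f g y₂) ≤ imSupP f g y₂ := min_le_right _ _
        _ = 0 := this
        _ ≤ imSupP f g (y₁ + y₂) := (imSupP_mem f g hb _).1
  · have : imSupP f g y₁ = 0 := if_neg h1
    calc min (imSupP f g y₁) (imSupP f g y₂) ≤ imSupP f g y₁ := min_le_left _ _
      _ = 0 := this
      _ ≤ imSupP f g (y₁ + y₂) := (imSupP_mem f g hb _).1

lemma imInfP_add (f : V → W) (hf : ∀ a b, f (a + b) = f a + f b)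
    (g : V → ℝ) (hb : ∀ x, g x ∈ Set.Icc (0:ℝ) 1)
    (hadd : ∀ x y : V, g (x + y) ≤ max (g x) (g y)) (y₁ y₂ : W) :
    imInfP f g (y₁ + y₂) ≤ max (imInfP f g y₁) (imInfP f g y₂) := by
  by_cases h1 : ∃ x, f x = y₁
  · by_cases h2 : ∃ x, f x = y₂
    · by_contra hc
      push_neg at hc
      rw [max_lt_iff] at hc
      have e1 : imInfP f g y₁ = sInf {t | ∃ x, f x = y₁ ∧ t = g x} := if_pos h1
      have e2 : imInfP f g y₂ = sInf {t | ∃ x, f x = y₂ ∧ t = g x} := if_pos h2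
      obtain ⟨x₁, hx₁⟩ := h1
      obtain ⟨x₂, hx₂⟩ := h2
      obtain ⟨t₁, ⟨a₁, ha₁, rfl⟩, ht₁⟩ :=
        exists_lt_of_csInf_lt (⟨g x₁, x₁, hx₁, rfl⟩ :
          {t | ∃ x, f x = y₁ ∧ t = g x}.Nonempty) (e1 ▸ hc.1)
      obtain ⟨t₂, ⟨a₂, ha₂, rfl⟩, ht₂⟩ :=
        exists_lt_of_csInf_lt (⟨g x₂, x₂, hx₂, rfl⟩ :
          {t | ∃ x, f x = y₂ ∧ t = g x}.Nonempty) (e2 ▸ hc.2)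
      have hmem : g (a₁ + a₂) ∈ {t | ∃ x, f x = y₁ + y₂ ∧ t = g x} :=
        ⟨a₁ + a₂, by rw [hf, ha₁, ha₂], rfl⟩
      have h12 : imInfP f g (y₁ + y₂) = sInf {t | ∃ x, f x = y₁ + y₂ ∧ t = g x} :=
        if_pos ⟨a₁ + a₂, by rw [hf, ha₁, ha₂]⟩
      have : imInfP f g (y₁ + y₂) ≤ g (a₁ + a₂) :=
        h12 ▸ csInf_le (imset_bddBelow f g hb _) hmem
      have hlt : g (a₁ + a₂) ≤ max (g a₁) (g a₂) := hadd a₁ a₂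
      rcases le_max_iff.mp hlt with h | h
      · linarith
      · linarith
    · have : imInfP f g y₂ = 1 := if_neg h2
      calc imInfP f g (y₁ + y₂) ≤ 1 := (imInfP_mem f g hb _).2
        _ = imInfP f g y₂ := this.symm
        _ ≤ max (imInfP f g y₁) (imInfP f g y₂) := le_max_right _ _
  · have : imInfP f g y₁ = 1 := if_neg h1
    calc imInfP f g (y₁ + y₂) ≤ 1 := (imInfP_mem f g hb _).2
      _ = imInfP f g y₁ := this.symm
      _ ≤ max (imInfP f g y₁) (imInfP f g y₂) := le_max_left _ _

lemma imSupP_smul {K : Type*} [Field K] [Module K V] [Module K W]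
    (f : V → W) (a : K) (hf : ∀ x, f (a • x) = a • f x)
    (g : V → ℝ) (hb : ∀ x, g x ∈ Set.Icc (0:ℝ) 1)
    (hsm : ∀ x : V, g x ≤ g (a • x)) (y : W) :
    imSupP f g y ≤ imSupP f g (a • y) := by
  by_cases h1 : ∃ x, f x = y
  · obtain ⟨x₀, hx₀⟩ := h1
    have h2 : ∃ x, f x = a • y := ⟨a • x₀, by rw [hf, hx₀]⟩
    have e1 : imSupP f g y = sSup {t | ∃ x, f x = y ∧ t = g x} := if_pos ⟨x₀, hx₀⟩
    have e2 : imSupP f g (a • y) = sSup {t | ∃ x, f x = a • y ∧ t = g x} := if_pos h2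
    rw [e1, e2]
    refine csSup_le ⟨g x₀, x₀, hx₀, rfl⟩ ?_
    rintro t ⟨x, hx, rfl⟩
    exact le_trans (hsm x)
      (le_csSup (imset_bddAbove f g hb _) ⟨a • x, by rw [hf, hx], rfl⟩)
  · have : imSupP f g y = 0 := if_neg h1
    rw [this]
    exact (imSupP_mem f g hb _).1

lemma imInfP_smul {K : Type*} [Field K] [Module K V] [Module K W]
    (f : V → W) (a : K) (hf : ∀ x, f (a • x) = a • f x)
    (g : V → ℝ) (hb : ∀ x, g x ∈ Set.Icc (0:ℝ) 1)
    (hsm : ∀ x : V, g (a • x) ≤ g x) (y : W) :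
    imInfP f g (a • y) ≤ imInfP f g y := by
  by_cases h1 : ∃ x, f x = y
  · obtain ⟨x₀, hx₀⟩ := h1
    have h2 : ∃ x, f x = a • y := ⟨a • x₀, by rw [hf, hx₀]⟩
    have e1 : imInfP f g y = sInf {t | ∃ x, f x = y ∧ t = g x} := if_pos ⟨x₀, hx₀⟩
    have e2 : imInfP f g (a • y) = sInf {t | ∃ x, f x = a • y ∧ t = g x} := if_pos h2
    rw [e1, e2]
    refine le_csInf ⟨g x₀, x₀, hx₀, rfl⟩ ?_
    rintro t ⟨x, hx, rfl⟩
    exact le_trans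
      (csInf_le (imset_bddBelow f g hb _) ⟨a • x, by rw [hf, hx], rfl⟩) (hsm x)
  · have : imInfP f g y = 1 := if_neg h1
    rw [this]
    exact (imInfP_mem f g hb _).2

lemma imSupP_zero (f : V → W) (hf0 : f 0 = 0)
    (g : V → ℝ) (hb : ∀ x, g x ∈ Set.Icc (0:ℝ) 1) (hg0 : g 0 = 1) :
    imSupP f g 0 = 1 := by
  have h : imSupP f g 0 = sSup {t | ∃ x, f x = (0:W) ∧ t = g x} := if_pos ⟨0, hf0⟩
  rw [h]
  refine le_antisymm (csSup_le ⟨g 0, 0, hf0, rfl⟩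
    (by rintro t ⟨x, _, rfl⟩; exact (hb x).2)) ?_
  have := le_csSup (imset_bddAbove f g hb (0:W)) (⟨0, hf0, rfl⟩ :
    g 0 ∈ {t | ∃ x, f x = (0:W) ∧ t = g x})
  rwa [hg0] at this

lemma imInfP_zero (f : V → W) (hf0 : f 0 = 0)
    (g : V → ℝ) (hb : ∀ x, g x ∈ Set.Icc (0:ℝ) 1) (hg0 : g 0 = 0) :
    imInfP f g 0 = 0 := by
  have h : imInfP f g 0 = sInf {t | ∃ x, f x = (0:W) ∧ t = g x} := if_pos ⟨0, hf0⟩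
  rw [h]
  refine le_antisymm ?_ (le_csInf ⟨g 0, 0, hf0, rfl⟩
    (by rintro t ⟨x, _, rfl⟩; exact (hb x).1))
  have := csInf_le (imset_bddBelow f g hb (0:W)) (⟨0, hf0, rfl⟩ :
    g 0 ∈ {t | ∃ x, f x = (0:W) ∧ t = g x})
  rwa [hg0] at this

end Grp
end AuxCIF

/-- the image of a CIF vector subspace under a linear map is a CIF vector
subspace of the codomain. -/
theorem cif_image_is_subspace {K V V' : Type*} [Field K]
    [AddCommGroup V] [Module K V] [AddCommGroup V'] [Module K V']
    (f : V →ₗ[K] V') (rA wA rhA whA : V → ℝ)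
    (hASet : IsCIFSet rA wA rhA whA) (hA : IsCIFSub K rA wA rhA whA) :
    IsCIFSet (imSupP (⇑f) rA) (imSupP (⇑f) wA) (imInfP (⇑f) rhA) (imInfP (⇑f) whA) ∧
    IsCIFSub K (imSupP (⇑f) rA) (imSupP (⇑f) wA) (imInfP (⇑f) rhA) (imInfP (⇑f) whA) := by
  obtain ⟨hr, hw, hrh, hwh, hsum⟩ := hASet
  obtain ⟨ar, aw, arh, awh, sr, sw, srh, swh, r0, w0, rh0, wh0⟩ := hA
  have hfadd : ∀ a b : V, f (a + b) = f a + f b := fun a b => f.map_add a b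
  have hfsmul : ∀ (a : K) (x : V), f (a • x) = a • f x := fun a x => f.map_smul a x
  refine ⟨⟨fun y => imSupP_mem _ _ hr y, fun y => imSupP_mem _ _ hw y,
      fun y => imInfP_mem _ _ hrh y, fun y => imInfP_mem _ _ hwh y,
      fun y => imSup_add_imInf_le _ _ _ hr hrh hsum y⟩,
    fun y₁ y₂ => imSupP_add _ hfadd _ hr ar y₁ y₂,
    fun y₁ y₂ => imSupP_add _ hfadd _ hw aw y₁ y₂,
    fun y₁ y₂ => imInfP_add _ hfadd _ hrh arh y₁ y₂,
    fun y₁ y₂ => imInfP_add _ hfadd _ hwh awh y₁ y₂,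
    fun a y => imSupP_smul _ a (hfsmul a) _ hr (sr a) y,
    fun a y => imSupP_smul _ a (hfsmul a) _ hw (sw a) y,
    fun a y => imInfP_smul _ a (hfsmul a) _ hrh (srh a) y,
    fun a y => imInfP_smul _ a (hfsmul a) _ hwh (swh a) y,
    imSupP_zero _ f.map_zero _ hr r0,
    imSupP_zero _ f.map_zero _ hw w0,
    imInfP_zero _ f.map_zero _ hrh rh0,
    imInfP_zero _ f.map_zero _ hwh wh0⟩
end
end

section
/- Let V = V₀ ⊕ V₁ be a Lie superalgebra. If A = (λ_A, ρ_A) is a CIF set of V such that all nonempty upper level sets U(λ_A,(t,s)) and all nonempty lower level sets L(ρ_A,(t,s)) (for t,s ∈ [0,1]) are Lie sub-superalgebras of V, then A = (λ_A, ρ_A) is a complex intuitionistic fuzzy Lie sub-superalgebra of V. -/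
open scoped Classical

noncomputable section

/-- A Lie superalgebra over `K`: a `Z₂`-graded vector space `V = V₀ ⊕ V₁` with a bilinear
bracket respecting the grading, super-antisymmetric and satisfying the super Jacobi identity. -/
structure LieSuper (K V : Type*) [Field K] [AddCommGroup V] [Module K V] where
  bracket : V →ₗ[K] V →ₗ[K] V
  grade : ZMod 2 → Submodule K V
  internal : DirectSum.IsInternal grade
  grade_bracket : ∀ (i j : ZMod 2), ∀ x ∈ grade i, ∀ y ∈ grade j, bracket x y ∈ grade (i + j)
  super_skew : ∀ (i j : ZMod 2), ∀ x ∈ grade i, ∀ y ∈ grade j,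
    bracket x y = -(((-1 : ℤ) ^ (i.val * j.val)) • bracket y x)
  super_jacobi : ∀ (i j : ZMod 2), ∀ x ∈ grade i, ∀ y ∈ grade j, ∀ z : V,
    bracket x (bracket y z) - ((-1 : ℤ) ^ (i.val * j.val)) • bracket y (bracket x z)
      = bracket (bracket x y) z

/-- `A = A₀ ⊕ A₁` is a `Z₂`-graded CIF vector subspace of `V`: a CIF vector subspace whose
value at `x = x₀ + x₁` (graded decomposition) is `λ_{A₀}(x₀) ⊓ λ_{A₁}(x₁)` resp.
`ρ_{A₀}(x₀) ⊔ ρ_{A₁}(x₁)`. -/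
def IsGradedCIF {K V : Type*} [Field K] [AddCommGroup V] [Module K V]
    (L : LieSuper K V) (r w rh wh : V → ℝ) : Prop :=
  IsCIFSub K r w rh wh ∧
  ∀ x0 ∈ L.grade 0, ∀ x1 ∈ L.grade 1,
    r (x0 + x1) = min (r x0) (r x1) ∧ w (x0 + x1) = min (w x0) (w x1) ∧
    rh (x0 + x1) = max (rh x0) (rh x1) ∧ wh (x0 + x1) = max (wh x0) (wh x1)

/-- CIF Lie sub-superalgebra: `λ([x,y]) ≥ λ(x) ∧ λ(y)` and `ρ([x,y]) ≤ ρ(x) ∨ ρ(y)`. -/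
def IsCIFLieSub {K V : Type*} [Field K] [AddCommGroup V] [Module K V]
    (L : LieSuper K V) (r w rh wh : V → ℝ) : Prop :=
  IsGradedCIF L r w rh wh ∧
  ∀ x y : V, min (r x) (r y) ≤ r (L.bracket x y) ∧ min (w x) (w y) ≤ w (L.bracket x y) ∧
    rh (L.bracket x y) ≤ max (rh x) (rh y) ∧ wh (L.bracket x y) ≤ max (wh x) (wh y)

/-- CIF ideal: `λ([x,y]) ≥ λ(x) ∨ λ(y)` and `ρ([x,y]) ≤ ρ(x) ∧ ρ(y)`. -/
def IsCIFLieIdeal {K V : Type*} [Field K] [AddCommGroup V] [Module K V]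
    (L : LieSuper K V) (r w rh wh : V → ℝ) : Prop :=
  IsGradedCIF L r w rh wh ∧
  ∀ x y : V, max (r x) (r y) ≤ r (L.bracket x y) ∧ max (w x) (w y) ≤ w (L.bracket x y) ∧
    rh (L.bracket x y) ≤ min (rh x) (rh y) ∧ wh (L.bracket x y) ≤ min (wh x) (wh y)

/-- Anti-CIF Lie sub-superalgebra: `λ(-[x,y]) ≥ λ(x) ∧ λ(y)`, `ρ(-[x,y]) ≤ ρ(x) ∨ ρ(y)`. -/
def IsAntiCIFLieSub {K V : Type*} [Field K] [AddCommGroup V] [Module K V]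
    (L : LieSuper K V) (r w rh wh : V → ℝ) : Prop :=
  IsGradedCIF L r w rh wh ∧
  ∀ x y : V, min (r x) (r y) ≤ r (-(L.bracket x y)) ∧ min (w x) (w y) ≤ w (-(L.bracket x y)) ∧
    rh (-(L.bracket x y)) ≤ max (rh x) (rh y) ∧ wh (-(L.bracket x y)) ≤ max (wh x) (wh y)

/-- Anti-CIF ideal: `λ(-[x,y]) ≥ λ(x) ∨ λ(y)`, `ρ(-[x,y]) ≤ ρ(x) ∧ ρ(y)`. -/
def IsAntiCIFLieIdeal {K V : Type*} [Field K] [AddCommGroup V] [Module K V]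
    (L : LieSuper K V) (r w rh wh : V → ℝ) : Prop :=
  IsGradedCIF L r w rh wh ∧
  ∀ x y : V, max (r x) (r y) ≤ r (-(L.bracket x y)) ∧ max (w x) (w y) ≤ w (-(L.bracket x y)) ∧
    rh (-(L.bracket x y)) ≤ min (rh x) (rh y) ∧ wh (-(L.bracket x y)) ≤ min (wh x) (wh y)

/-- A (crisp) Lie sub-superalgebra of `V`: a `Z₂`-graded subspace closed under the bracket. -/
def IsLieSubSuper {K V : Type*} [Field K] [AddCommGroup V] [Module K V]
    (L : LieSuper K V) (S : Set V) : Prop :=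
  (∀ x ∈ S, ∀ y ∈ S, x + y ∈ S) ∧ (∀ (a : K), ∀ x ∈ S, a • x ∈ S) ∧
  (∀ x0 ∈ L.grade 0, ∀ x1 ∈ L.grade 1, x0 + x1 ∈ S → x0 ∈ S ∧ x1 ∈ S) ∧
  (∀ x ∈ S, ∀ y ∈ S, L.bracket x y ∈ S)

/-- if all nonempty upper level sets of `λ_A` and all nonempty lower level sets
of `ρ_A` are Lie sub-superalgebras, then `A` is a CIF Lie sub-superalgebra
(`A` being normalized as in the paper: `λ_A(0) = 1`, `ρ_A(0) = 0`). -/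
theorem level_sets_to_cifLieSub {K V : Type*} [Field K] [AddCommGroup V] [Module K V]
    (L : LieSuper K V) (rA wA rhA whA : V → ℝ)
    (hASet : IsCIFSet rA wA rhA whA)
    (h0 : rA 0 = 1 ∧ wA 0 = 1 ∧ rhA 0 = 0 ∧ whA 0 = 0)
    (hU : ∀ t ∈ Set.Icc (0:ℝ) 1, ∀ s ∈ Set.Icc (0:ℝ) 1,
      ({x | t ≤ rA x ∧ s ≤ wA x} : Set V).Nonempty →
        IsLieSubSuper L {x | t ≤ rA x ∧ s ≤ wA x})
    (hL : ∀ t ∈ Set.Icc (0:ℝ) 1, ∀ s ∈ Set.Icc (0:ℝ) 1,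
      ({x | rhA x ≤ t ∧ whA x ≤ s} : Set V).Nonempty →
        IsLieSubSuper L {x | rhA x ≤ t ∧ whA x ≤ s}) :
    IsCIFLieSub L rA wA rhA whA := by
  obtain ⟨hr, hw, hrh, hwh, -⟩ := hASet
  obtain ⟨hr0, hw0, hrh0, hwh0⟩ := h0
  -- upper level set facts
  have hUadd : ∀ x y : V,
      min (rA x) (rA y) ≤ rA (x + y) ∧ min (wA x) (wA y) ≤ wA (x + y) := by
    intro x y
    have ht : min (rA x) (rA y) ∈ Set.Icc (0:ℝ) 1 :=
      ⟨le_min (hr x).1 (hr y).1, le_trans (min_le_left _ _) (hr x).2⟩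
    have hs : min (wA x) (wA y) ∈ Set.Icc (0:ℝ) 1 :=
      ⟨le_min (hw x).1 (hw y).1, le_trans (min_le_left _ _) (hw x).2⟩
    have hx : x ∈ {z | min (rA x) (rA y) ≤ rA z ∧ min (wA x) (wA y) ≤ wA z} :=
      ⟨min_le_left _ _, min_le_left _ _⟩
    have hy : y ∈ {z | min (rA x) (rA y) ≤ rA z ∧ min (wA x) (wA y) ≤ wA z} :=
      ⟨min_le_right _ _, min_le_right _ _⟩
    exact (hU _ ht _ hs ⟨x, hx⟩).1 x hx y hy
  have hUsmul : ∀ (a : K) (x : V), rA x ≤ rA (a • x) ∧ wA x ≤ wA (a • x) := by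
    intro a x
    have hx : x ∈ {z | rA x ≤ rA z ∧ wA x ≤ wA z} := ⟨le_refl _, le_refl _⟩
    exact (hU _ (hr x) _ (hw x) ⟨x, hx⟩).2.1 a x hx
  have hUbr : ∀ x y : V,
      min (rA x) (rA y) ≤ rA (L.bracket x y) ∧
      min (wA x) (wA y) ≤ wA (L.bracket x y) := by
    intro x y
    have ht : min (rA x) (rA y) ∈ Set.Icc (0:ℝ) 1 :=
      ⟨le_min (hr x).1 (hr y).1, le_trans (min_le_left _ _) (hr x).2⟩
    have hs : min (wA x) (wA y) ∈ Set.Icc (0:ℝ) 1 :=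
      ⟨le_min (hw x).1 (hw y).1, le_trans (min_le_left _ _) (hw x).2⟩
    have hx : x ∈ {z | min (rA x) (rA y) ≤ rA z ∧ min (wA x) (wA y) ≤ wA z} :=
      ⟨min_le_left _ _, min_le_left _ _⟩
    have hy : y ∈ {z | min (rA x) (rA y) ≤ rA z ∧ min (wA x) (wA y) ≤ wA z} :=
      ⟨min_le_right _ _, min_le_right _ _⟩
    exact (hU _ ht _ hs ⟨x, hx⟩).2.2.2 x hx y hy
  have hUsplit : ∀ x0 ∈ L.grade 0, ∀ x1 ∈ L.grade 1,
      (rA (x0 + x1) ≤ rA x0 ∧ wA (x0 + x1) ≤ wA x0) ∧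
      (rA (x0 + x1) ≤ rA x1 ∧ wA (x0 + x1) ≤ wA x1) := by
    intro x0 h0 x1 h1
    have hx : x0 + x1 ∈ {z | rA (x0 + x1) ≤ rA z ∧ wA (x0 + x1) ≤ wA z} :=
      ⟨le_refl _, le_refl _⟩
    exact (hU _ (hr _) _ (hw _) ⟨_, hx⟩).2.2.1 x0 h0 x1 h1 hx
  -- lower level set facts
  have hLadd : ∀ x y : V,
      rhA (x + y) ≤ max (rhA x) (rhA y) ∧ whA (x + y) ≤ max (whA x) (whA y) := by
    intro x y
    have ht : max (rhA x) (rhA y) ∈ Set.Icc (0:ℝ) 1 :=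
      ⟨le_trans (hrh x).1 (le_max_left _ _), max_le (hrh x).2 (hrh y).2⟩
    have hs : max (whA x) (whA y) ∈ Set.Icc (0:ℝ) 1 :=
      ⟨le_trans (hwh x).1 (le_max_left _ _), max_le (hwh x).2 (hwh y).2⟩
    have hx : x ∈ {z | rhA z ≤ max (rhA x) (rhA y) ∧ whA z ≤ max (whA x) (whA y)} :=
      ⟨le_max_left _ _, le_max_left _ _⟩
    have hy : y ∈ {z | rhA z ≤ max (rhA x) (rhA y) ∧ whA z ≤ max (whA x) (whA y)} :=
      ⟨le_max_right _ _, le_max_right _ _⟩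
    exact (hL _ ht _ hs ⟨x, hx⟩).1 x hx y hy
  have hLsmul : ∀ (a : K) (x : V), rhA (a • x) ≤ rhA x ∧ whA (a • x) ≤ whA x := by
    intro a x
    have hx : x ∈ {z | rhA z ≤ rhA x ∧ whA z ≤ whA x} := ⟨le_refl _, le_refl _⟩
    exact (hL _ (hrh x) _ (hwh x) ⟨x, hx⟩).2.1 a x hx
  have hLbr : ∀ x y : V,
      rhA (L.bracket x y) ≤ max (rhA x) (rhA y) ∧
      whA (L.bracket x y) ≤ max (whA x) (whA y) := by
    intro x y
    have ht : max (rhA x) (rhA y) ∈ Set.Icc (0:ℝ) 1 :=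
      ⟨le_trans (hrh x).1 (le_max_left _ _), max_le (hrh x).2 (hrh y).2⟩
    have hs : max (whA x) (whA y) ∈ Set.Icc (0:ℝ) 1 :=
      ⟨le_trans (hwh x).1 (le_max_left _ _), max_le (hwh x).2 (hwh y).2⟩
    have hx : x ∈ {z | rhA z ≤ max (rhA x) (rhA y) ∧ whA z ≤ max (whA x) (whA y)} :=
      ⟨le_max_left _ _, le_max_left _ _⟩
    have hy : y ∈ {z | rhA z ≤ max (rhA x) (rhA y) ∧ whA z ≤ max (whA x) (whA y)} :=
      ⟨le_max_right _ _, le_max_right _ _⟩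
    exact (hL _ ht _ hs ⟨x, hx⟩).2.2.2 x hx y hy
  have hLsplit : ∀ x0 ∈ L.grade 0, ∀ x1 ∈ L.grade 1,
      (rhA x0 ≤ rhA (x0 + x1) ∧ whA x0 ≤ whA (x0 + x1)) ∧
      (rhA x1 ≤ rhA (x0 + x1) ∧ whA x1 ≤ whA (x0 + x1)) := by
    intro x0 h0 x1 h1
    have hx : x0 + x1 ∈ {z | rhA z ≤ rhA (x0 + x1) ∧ whA z ≤ whA (x0 + x1)} :=
      ⟨le_refl _, le_refl _⟩
    exact (hL _ (hrh _) _ (hwh _) ⟨_, hx⟩).2.2.1 x0 h0 x1 h1 hx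
  refine ⟨⟨⟨fun x y => (hUadd x y).1, fun x y => (hUadd x y).2,
      fun x y => (hLadd x y).1, fun x y => (hLadd x y).2,
      fun a x => (hUsmul a x).1, fun a x => (hUsmul a x).2,
      fun a x => (hLsmul a x).1, fun a x => (hLsmul a x).2,
      hr0, hw0, hrh0, hwh0⟩, ?_⟩,
    fun x y => ⟨(hUbr x y).1, (hUbr x y).2, (hLbr x y).1, (hLbr x y).2⟩⟩
  intro x0 h0 x1 h1
  obtain ⟨⟨hu1, hu2⟩, ⟨hu3, hu4⟩⟩ := hUsplit x0 h0 x1 h1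
  obtain ⟨⟨hl1, hl2⟩, ⟨hl3, hl4⟩⟩ := hLsplit x0 h0 x1 h1
  exact ⟨le_antisymm (le_min hu1 hu3) (hUadd x0 x1).1,
    le_antisymm (le_min hu2 hu4) (hUadd x0 x1).2,
    le_antisymm (hLadd x0 x1).1 (max_le hl1 hl3),
    le_antisymm (hLadd x0 x1).2 (max_le hl2 hl4)⟩
end
end

section
/- A CIF set A = (λ_A, ρ_A) on a Lie superalgebra V is a complex intuitionistic fuzzy Lie sub-superalgebra of V if and only if both A^c = (λ_A, λ_A^c) and A^L = (ρ_A^c, ρ_A) are complex intuitionistic fuzzy Lie sub-superalgebras of V, where λ_A^c(x) = (1-r_A(x))e^{i2π(1-ω_A(x))} and ρ_A^c(x) = (1-r̂_A(x))e^{i2π(1-ω̂_A(x))}. -/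
open scoped Classical

noncomputable section

/-- `A` is a CIF Lie sub-superalgebra iff both `A^c = (λ_A, λ_A^c)` and
`A^L = (ρ_A^c, ρ_A)` are CIF Lie sub-superalgebras. -/
theorem cifLieSub_iff_complement_dual {K V : Type*} [Field K] [AddCommGroup V] [Module K V]
    (L : LieSuper K V) (rA wA rhA whA : V → ℝ)
    (hASet : IsCIFSet rA wA rhA whA) :
    IsCIFLieSub L rA wA rhA whA ↔
      (IsCIFLieSub L rA wA (fun x => 1 - rA x) (fun x => 1 - wA x) ∧
       IsCIFLieSub L (fun x => 1 - rhA x) (fun x => 1 - whA x) rhA whA) := by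
  constructor
  · rintro ⟨⟨⟨h1,h2,h3,h4,h5,h6,h7,h8,h9,h10,h11,h12⟩, hg⟩, hb⟩
    refine ⟨⟨⟨⟨h1,h2,?_,?_,h5,h6,?_,?_,h9,h10,?_,?_⟩,?_⟩,?_⟩,
            ⟨⟨⟨?_,?_,h3,h4,?_,?_,h7,h8,?_,?_,h11,h12⟩,?_⟩,?_⟩⟩
    · intro x y; dsimp only; rw [max_sub_sub_left]; have := h1 x y; linarith
    · intro x y; dsimp only; rw [max_sub_sub_left]; have := h2 x y; linarith
    · intro a x; have := h5 a x; dsimp only; linarith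
    · intro a x; have := h6 a x; dsimp only; linarith
    · simp [h9]
    · simp [h10]
    · intro x0 hx0 x1 hx1
      obtain ⟨e1,e2,e3,e4⟩ := hg x0 hx0 x1 hx1
      exact ⟨e1, e2, by dsimp only; rw [max_sub_sub_left, e1], by dsimp only; rw [max_sub_sub_left, e2]⟩
    · intro x y
      obtain ⟨b1,b2,b3,b4⟩ := hb x y
      exact ⟨b1, b2, by dsimp only; rw [max_sub_sub_left]; linarith, by dsimp only; rw [max_sub_sub_left]; linarith⟩
    · intro x y; dsimp only; rw [min_sub_sub_left]; have := h3 x y; linarith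
    · intro x y; dsimp only; rw [min_sub_sub_left]; have := h4 x y; linarith
    · intro a x; have := h7 a x; dsimp only; linarith
    · intro a x; have := h8 a x; dsimp only; linarith
    · simp [h11]
    · simp [h12]
    · intro x0 hx0 x1 hx1
      obtain ⟨e1,e2,e3,e4⟩ := hg x0 hx0 x1 hx1
      exact ⟨by dsimp only; rw [min_sub_sub_left, e3], by dsimp only; rw [min_sub_sub_left, e4], e3, e4⟩
    · intro x y
      obtain ⟨b1,b2,b3,b4⟩ := hb x y
      exact ⟨by dsimp only; rw [min_sub_sub_left]; linarith, by dsimp only; rw [min_sub_sub_left]; linarith, b3, b4⟩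
  · rintro ⟨⟨⟨⟨c1,c2,_,_,c5,c6,_,_,c9,c10,_,_⟩,cg⟩,cb⟩,
            ⟨⟨⟨_,_,d3,d4,_,_,d7,d8,_,_,d11,d12⟩,dg⟩,db⟩⟩
    refine ⟨⟨⟨c1,c2,d3,d4,c5,c6,d7,d8,c9,c10,d11,d12⟩,?_⟩,?_⟩
    · intro x0 hx0 x1 hx1
      obtain ⟨e1,e2,_,_⟩ := cg x0 hx0 x1 hx1
      obtain ⟨_,_,f3,f4⟩ := dg x0 hx0 x1 hx1
      exact ⟨e1,e2,f3,f4⟩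
    · intro x y
      obtain ⟨b1,b2,_,_⟩ := cb x y
      obtain ⟨_,_,b3,b4⟩ := db x y
      exact ⟨b1,b2,b3,b4⟩
end
end

section
/- Let φ : V → V' be an anti-homomorphism of Lie superalgebras (φ linear, φ(V_α) ⊆ V'_α, φ([x,y]) = -[φ(x),φ(y)]). If A = (λ_A, ρ_A) is an anti-CIF ideal of V', then φ⁻¹(A) = (λ_A ∘ φ, ρ_A ∘ φ) is an anti-CIF ideal of V. -/
open scoped Classical

noncomputable section

/-- the preimage of an anti-CIF ideal under an anti-homomorphism of Lie
superalgebras is an anti-CIF ideal. -/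
theorem preimage_antiCIFIdeal {K V V' : Type*} [Field K]
    [AddCommGroup V] [Module K V] [AddCommGroup V'] [Module K V']
    (L : LieSuper K V) (L' : LieSuper K V') (φ : V →ₗ[K] V')
    (hgr : ∀ i : ZMod 2, ∀ x ∈ L.grade i, φ x ∈ L'.grade i)
    (hanti : ∀ x y : V, φ (L.bracket x y) = -(L'.bracket (φ x) (φ y)))
    (rA wA rhA whA : V' → ℝ)
    (hASet : IsCIFSet rA wA rhA whA) (hA : IsAntiCIFLieIdeal L' rA wA rhA whA) :
    IsAntiCIFLieIdeal L (fun x => rA (φ x)) (fun x => wA (φ x))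
      (fun x => rhA (φ x)) (fun x => whA (φ x)) := by
  obtain ⟨⟨⟨hr, hw, hrh, hwh, hrs, hws, hrhs, hwhs, hr0, hw0, hrh0, hwh0⟩, hgraded⟩, hbr⟩ := hA
  have hrneg : ∀ v : V', rA (-v) = rA v := fun v =>
    le_antisymm (by simpa using hrs (-1 : K) (-v)) (by simpa using hrs (-1 : K) v)
  have hwneg : ∀ v : V', wA (-v) = wA v := fun v =>
    le_antisymm (by simpa using hws (-1 : K) (-v)) (by simpa using hws (-1 : K) v)
  have hrhneg : ∀ v : V', rhA (-v) = rhA v := fun v =>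
    le_antisymm (by simpa using hrhs (-1 : K) v) (by simpa using hrhs (-1 : K) (-v))
  have hwhneg : ∀ v : V', whA (-v) = whA v := fun v =>
    le_antisymm (by simpa using hwhs (-1 : K) v) (by simpa using hwhs (-1 : K) (-v))
  refine ⟨⟨⟨?_, ?_, ?_, ?_, ?_, ?_, ?_, ?_, ?_, ?_, ?_, ?_⟩, ?_⟩, ?_⟩
  · intro x y; simpa [map_add] using hr (φ x) (φ y)
  · intro x y; simpa [map_add] using hw (φ x) (φ y)
  · intro x y; simpa [map_add] using hrh (φ x) (φ y)
  · intro x y; simpa [map_add] using hwh (φ x) (φ y)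
  · intro a x; simpa [map_smul] using hrs a (φ x)
  · intro a x; simpa [map_smul] using hws a (φ x)
  · intro a x; simpa [map_smul] using hrhs a (φ x)
  · intro a x; simpa [map_smul] using hwhs a (φ x)
  · simpa [map_zero] using hr0
  · simpa [map_zero] using hw0
  · simpa [map_zero] using hrh0
  · simpa [map_zero] using hwh0
  · intro x0 hx0 x1 hx1
    simpa [map_add] using hgraded (φ x0) (hgr 0 x0 hx0) (φ x1) (hgr 1 x1 hx1)
  · intro x y
    have key : φ (-(L.bracket x y)) = -(-(L'.bracket (φ x) (φ y))) := by
      rw [map_neg, hanti]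
    have h := hbr (φ x) (φ y)
    simp only [hrneg, hwneg, hrhneg, hwhneg] at h
    simpa [key] using h
end
end

section
/- Let φ : V → V' be a surjective anti-homomorphism of Lie superalgebras. If A = (λ_A, ρ_A) is an anti-CIF Lie sub-superalgebra of V, then the image φ(A) = (λ_{φ(A)}, ρ_{φ(A)}), defined by λ_{φ(A)}(y) = sup{λ_A(x) : φ(x) = y} and ρ_{φ(A)}(y) = inf{ρ_A(x) : φ(x) = y}, is an anti-CIF Lie sub-superalgebra of V'. -/
open scoped Classical

noncomputable section

/-- Membership component of the image `f(A)` of a CIF set under a surjective map. -/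
def imSup {V W : Type*} (f : V → W) (g : V → ℝ) (y : W) : ℝ :=
  sSup {t | ∃ x, f x = y ∧ t = g x}

/-- Non-membership component of the image `f(A)` of a CIF set under a surjective map. -/
def imInf {V W : Type*} (f : V → W) (g : V → ℝ) (y : W) : ℝ :=
  sInf {t | ∃ x, f x = y ∧ t = g x}

section aux
variable {V W : Type*} {f : V → W} {g : V → ℝ}

lemma le_imSup (hg : ∀ x, g x ≤ 1) {x : V} {y : W} (hx : f x = y) : g x ≤ imSup f g y :=
  le_csSup ⟨1, by rintro t ⟨x, _, rfl⟩; exact hg x⟩ ⟨x, hx, rfl⟩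

lemma imSup_le (hs : Function.Surjective f) {y : W} {c : ℝ} (h : ∀ x, f x = y → g x ≤ c) :
    imSup f g y ≤ c := by
  obtain ⟨x0, hx0⟩ := hs y
  exact csSup_le ⟨g x0, x0, hx0, rfl⟩ (by rintro t ⟨x, hx, rfl⟩; exact h x hx)

lemma imInf_le (hg : ∀ x, 0 ≤ g x) {x : V} {y : W} (hx : f x = y) : imInf f g y ≤ g x :=
  csInf_le ⟨0, by rintro t ⟨x, _, rfl⟩; exact hg x⟩ ⟨x, hx, rfl⟩

lemma le_imInf (hs : Function.Surjective f) {y : W} {c : ℝ} (h : ∀ x, f x = y → c ≤ g x) :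
    c ≤ imInf f g y := by
  obtain ⟨x0, hx0⟩ := hs y
  exact le_csInf ⟨g x0, x0, hx0, rfl⟩ (by rintro t ⟨x, hx, rfl⟩; exact h x hx)

lemma imSup_approx (hs : Function.Surjective f) {y : W} {ε : ℝ} (hε : 0 < ε) :
    ∃ x, f x = y ∧ imSup f g y - ε < g x := by
  obtain ⟨x0, hx0⟩ := hs y
  obtain ⟨t, ⟨x, hx, rfl⟩, ht⟩ :=
    exists_lt_of_lt_csSup (s := {t | ∃ x, f x = y ∧ t = g x}) ⟨g x0, x0, hx0, rfl⟩
      (sub_lt_self _ hε)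
  exact ⟨x, hx, ht⟩

lemma imInf_approx (hs : Function.Surjective f) {y : W} {ε : ℝ} (hε : 0 < ε) :
    ∃ x, f x = y ∧ g x < imInf f g y + ε := by
  obtain ⟨x0, hx0⟩ := hs y
  obtain ⟨t, ⟨x, hx, rfl⟩, ht⟩ :=
    exists_lt_of_csInf_lt (s := {t | ∃ x, f x = y ∧ t = g x}) ⟨g x0, x0, hx0, rfl⟩
      (lt_add_of_pos_right _ hε)
  exact ⟨x, hx, ht⟩

end aux

section decomp
variable {K V : Type*} [Field K] [AddCommGroup V] [Module K V] (L : LieSuper K V)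

lemma LieSuper.exists_decomp (x : V) :
    ∃ x0 ∈ L.grade 0, ∃ x1 ∈ L.grade 1, x = x0 + x1 := by
  have htop : L.grade 0 ⊔ L.grade 1 = ⊤ := by
    rw [← L.internal.submodule_iSup_eq_top]
    refine le_antisymm (sup_le (le_iSup _ 0) (le_iSup _ 1)) (iSup_le fun i => ?_)
    have h2 : ∀ j : ZMod 2, j = 0 ∨ j = 1 := by decide
    rcases h2 i with rfl | rfl
    · exact le_sup_left
    · exact le_sup_right
  have hmem : x ∈ L.grade 0 ⊔ L.grade 1 := htop ▸ Submodule.mem_top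
  obtain ⟨x0, h0, x1, h1, h⟩ := Submodule.mem_sup.mp hmem
  exact ⟨x0, h0, x1, h1, h.symm⟩

lemma LieSuper.disjoint01 : Disjoint (L.grade 0) (L.grade 1) := by
  have h := L.internal.submodule_iSupIndep 0
  exact h.mono_right (le_iSup₂ (f := fun j (_ : j ≠ (0 : ZMod 2)) => L.grade j) 1 one_ne_zero)

lemma LieSuper.decomp_unique {u0 u1 v0 v1 : V} (hu0 : u0 ∈ L.grade 0) (hu1 : u1 ∈ L.grade 1)
    (hv0 : v0 ∈ L.grade 0) (hv1 : v1 ∈ L.grade 1) (h : u0 + u1 = v0 + v1) :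
    u0 = v0 ∧ u1 = v1 := by
  have key : u0 - v0 = v1 - u1 := by
    rw [sub_eq_sub_iff_add_eq_add, h, add_comm]
  have h0 : u0 - v0 ∈ L.grade 0 := sub_mem hu0 hv0
  have h1 : u0 - v0 ∈ L.grade 1 := key ▸ sub_mem hv1 hu1
  have hz : u0 - v0 = 0 := (Submodule.disjoint_def.mp L.disjoint01) _ h0 h1
  have h0' : u0 = v0 := sub_eq_zero.mp hz
  refine ⟨h0', ?_⟩
  have : u0 + u1 = u0 + v1 := by rw [h, h0']
  exact add_left_cancel this

end decomp

section master
variable {K V V' : Type*} [Field K] [AddCommGroup V] [Module K V] [AddCommGroup V'] [Module K V']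
variable {L : LieSuper K V} {L' : LieSuper K V'} {φ : V →ₗ[K] V'}

lemma imSup_binary (hs : Function.Surjective φ) {g : V → ℝ} (hg1 : ∀ x, g x ≤ 1)
    {B : V → V → V} {B' : V' → V' → V'} (hcomp : ∀ a b, φ (B a b) = B' (φ a) (φ b))
    (hsub : ∀ a b, min (g a) (g b) ≤ g (B a b)) (x y : V') :
    min (imSup (⇑φ) g x) (imSup (⇑φ) g y) ≤ imSup (⇑φ) g (B' x y) := by
  refine le_of_forall_pos_le_add fun ε hε => ?_
  obtain ⟨a, ha, hga⟩ := imSup_approx (g := g) hs (y := x) hε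
  obtain ⟨b, hb, hgb⟩ := imSup_approx (g := g) hs (y := y) hε
  have h1 : g (B a b) ≤ imSup (⇑φ) g (B' x y) :=
    le_imSup hg1 (by rw [hcomp, ha, hb])
  have h2 : min (imSup (⇑φ) g x) (imSup (⇑φ) g y) - ε ≤ min (g a) (g b) := by
    refine le_min ?_ ?_
    · have := min_le_left (imSup (⇑φ) g x) (imSup (⇑φ) g y); linarith
    · have := min_le_right (imSup (⇑φ) g x) (imSup (⇑φ) g y); linarith
  have := hsub a b
  linarith

lemma imInf_binary (hs : Function.Surjective φ) {g : V → ℝ} (hg0 : ∀ x, 0 ≤ g x)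
    {B : V → V → V} {B' : V' → V' → V'} (hcomp : ∀ a b, φ (B a b) = B' (φ a) (φ b))
    (hsub : ∀ a b, g (B a b) ≤ max (g a) (g b)) (x y : V') :
    imInf (⇑φ) g (B' x y) ≤ max (imInf (⇑φ) g x) (imInf (⇑φ) g y) := by
  refine le_of_forall_pos_le_add fun ε hε => ?_
  obtain ⟨a, ha, hga⟩ := imInf_approx (g := g) hs (y := x) hε
  obtain ⟨b, hb, hgb⟩ := imInf_approx (g := g) hs (y := y) hε
  have h1 : imInf (⇑φ) g (B' x y) ≤ g (B a b) :=
    imInf_le hg0 (by rw [hcomp, ha, hb])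
  have h2 : max (g a) (g b) ≤ max (imInf (⇑φ) g x) (imInf (⇑φ) g y) + ε := by
    refine max_le ?_ ?_
    · have := le_max_left (imInf (⇑φ) g x) (imInf (⇑φ) g y); linarith
    · have := le_max_right (imInf (⇑φ) g x) (imInf (⇑φ) g y); linarith
  have := hsub a b
  linarith

lemma imSup_graded (hs : Function.Surjective φ)
    (hgr : ∀ i : ZMod 2, ∀ x ∈ L.grade i, φ x ∈ L'.grade i)
    {g : V → ℝ} (hg1 : ∀ x, g x ≤ 1)
    (hgd : ∀ x0 ∈ L.grade 0, ∀ x1 ∈ L.grade 1, g (x0 + x1) = min (g x0) (g x1))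
    {x0 x1 : V'} (h0 : x0 ∈ L'.grade 0) (h1 : x1 ∈ L'.grade 1) :
    imSup (⇑φ) g (x0 + x1) = min (imSup (⇑φ) g x0) (imSup (⇑φ) g x1) := by
  refine le_antisymm ?_ ?_
  · refine imSup_le hs fun c hc => ?_
    obtain ⟨c0, hc0, c1, hc1, rfl⟩ := L.exists_decomp c
    have heq : φ c0 = x0 ∧ φ c1 = x1 :=
      L'.decomp_unique (hgr 0 _ hc0) (hgr 1 _ hc1) h0 h1 (by rw [← map_add, hc])
    rw [hgd _ hc0 _ hc1]
    exact min_le_min (le_imSup hg1 heq.1) (le_imSup hg1 heq.2)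
  · refine le_of_forall_pos_le_add fun ε hε => ?_
    obtain ⟨a, ha, hga⟩ := imSup_approx (g := g) hs (y := x0) hε
    obtain ⟨b, hb, hgb⟩ := imSup_approx (g := g) hs (y := x1) hε
    obtain ⟨a0, ha0, a1, ha1, rfl⟩ := L.exists_decomp a
    obtain ⟨b0, hb0, b1, hb1, rfl⟩ := L.exists_decomp b
    have heqa : φ a0 = x0 ∧ φ a1 = 0 :=
      L'.decomp_unique (hgr 0 _ ha0) (hgr 1 _ ha1) h0 (Submodule.zero_mem _)
        (by rw [← map_add, ha, add_zero])
    have heqb : φ b0 = 0 ∧ φ b1 = x1 :=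
      L'.decomp_unique (hgr 0 _ hb0) (hgr 1 _ hb1) (Submodule.zero_mem _) h1
        (by rw [← map_add, hb, zero_add])
    have hc : φ (a0 + b1) = x0 + x1 := by rw [map_add, heqa.1, heqb.2]
    have hga0 : g (a0 + a1) ≤ g a0 := by rw [hgd _ ha0 _ ha1]; exact min_le_left _ _
    have hgb1 : g (b0 + b1) ≤ g b1 := by rw [hgd _ hb0 _ hb1]; exact min_le_right _ _
    have hkey : min (imSup (⇑φ) g x0) (imSup (⇑φ) g x1) - ε ≤ g (a0 + b1) := by
      rw [hgd _ ha0 _ hb1]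
      refine le_min ?_ ?_
      · have := min_le_left (imSup (⇑φ) g x0) (imSup (⇑φ) g x1); linarith
      · have := min_le_right (imSup (⇑φ) g x0) (imSup (⇑φ) g x1); linarith
    have := le_imSup hg1 hc
    linarith

lemma imInf_graded (hs : Function.Surjective φ)
    (hgr : ∀ i : ZMod 2, ∀ x ∈ L.grade i, φ x ∈ L'.grade i)
    {g : V → ℝ} (hg0 : ∀ x, 0 ≤ g x)
    (hgd : ∀ x0 ∈ L.grade 0, ∀ x1 ∈ L.grade 1, g (x0 + x1) = max (g x0) (g x1))
    {x0 x1 : V'} (h0 : x0 ∈ L'.grade 0) (h1 : x1 ∈ L'.grade 1) :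
    imInf (⇑φ) g (x0 + x1) = max (imInf (⇑φ) g x0) (imInf (⇑φ) g x1) := by
  refine le_antisymm ?_ ?_
  · refine le_of_forall_pos_le_add fun ε hε => ?_
    obtain ⟨a, ha, hga⟩ := imInf_approx (g := g) hs (y := x0) hε
    obtain ⟨b, hb, hgb⟩ := imInf_approx (g := g) hs (y := x1) hε
    obtain ⟨a0, ha0, a1, ha1, rfl⟩ := L.exists_decomp a
    obtain ⟨b0, hb0, b1, hb1, rfl⟩ := L.exists_decomp b
    have heqa : φ a0 = x0 ∧ φ a1 = 0 :=
      L'.decomp_unique (hgr 0 _ ha0) (hgr 1 _ ha1) h0 (Submodule.zero_mem _)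
        (by rw [← map_add, ha, add_zero])
    have heqb : φ b0 = 0 ∧ φ b1 = x1 :=
      L'.decomp_unique (hgr 0 _ hb0) (hgr 1 _ hb1) (Submodule.zero_mem _) h1
        (by rw [← map_add, hb, zero_add])
    have hc : φ (a0 + b1) = x0 + x1 := by rw [map_add, heqa.1, heqb.2]
    have hga0 : g a0 ≤ g (a0 + a1) := by rw [hgd _ ha0 _ ha1]; exact le_max_left _ _
    have hgb1 : g b1 ≤ g (b0 + b1) := by rw [hgd _ hb0 _ hb1]; exact le_max_right _ _
    have hkey : g (a0 + b1) ≤ max (imInf (⇑φ) g x0) (imInf (⇑φ) g x1) + ε := by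
      rw [hgd _ ha0 _ hb1]
      refine max_le ?_ ?_
      · have := le_max_left (imInf (⇑φ) g x0) (imInf (⇑φ) g x1); linarith
      · have := le_max_right (imInf (⇑φ) g x0) (imInf (⇑φ) g x1); linarith
    have := imInf_le hg0 hc
    linarith
  · refine le_imInf hs fun c hc => ?_
    obtain ⟨c0, hc0, c1, hc1, rfl⟩ := L.exists_decomp c
    have heq : φ c0 = x0 ∧ φ c1 = x1 :=
      L'.decomp_unique (hgr 0 _ hc0) (hgr 1 _ hc1) h0 h1 (by rw [← map_add, hc])
    rw [hgd _ hc0 _ hc1]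
    exact max_le_max (imInf_le hg0 heq.1) (imInf_le hg0 heq.2)

end master

/-- the image of an anti-CIF Lie sub-superalgebra (homogeneous) under a
surjective anti-homomorphism of Lie superalgebras is an anti-CIF Lie sub-superalgebra. -/
theorem image_antiCIFLieSub {K V V' : Type*} [Field K]
    [AddCommGroup V] [Module K V] [AddCommGroup V'] [Module K V']
    (L : LieSuper K V) (L' : LieSuper K V') (φ : V →ₗ[K] V')
    (hsurj : Function.Surjective φ)
    (hgr : ∀ i : ZMod 2, ∀ x ∈ L.grade i, φ x ∈ L'.grade i)
    (hanti : ∀ x y : V, φ (L.bracket x y) = -(L'.bracket (φ x) (φ y)))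
    (rA wA rhA whA : V → ℝ)
    (hASet : IsCIFSet rA wA rhA whA)
    (hhom : Homog rA wA rhA whA rA wA rhA whA)
    (hA : IsAntiCIFLieSub L rA wA rhA whA) :
    IsCIFSet (imSup (⇑φ) rA) (imSup (⇑φ) wA) (imInf (⇑φ) rhA) (imInf (⇑φ) whA) ∧
    IsAntiCIFLieSub L' (imSup (⇑φ) rA) (imSup (⇑φ) wA)
      (imInf (⇑φ) rhA) (imInf (⇑φ) whA) := by
  obtain ⟨hr, hw, hrh, hwh, hsum⟩ := hASet
  obtain ⟨⟨⟨hr_add, hw_add, hrh_add, hwh_add, hr_smul, hw_smul, hrh_smul, hwh_smul,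
    hr0, hw0, hrh0, hwh0⟩, hAgr⟩, hAbr⟩ := hA
  have hr1 : ∀ x, rA x ≤ 1 := fun x => (hr x).2
  have hw1 : ∀ x, wA x ≤ 1 := fun x => (hw x).2
  have hrh0' : ∀ x, 0 ≤ rhA x := fun x => (hrh x).1
  have hwh0' : ∀ x, 0 ≤ whA x := fun x => (hwh x).1
  have hrneg : ∀ z, rA (-z) = rA z := fun z => le_antisymm
    (by have := hr_smul (-1 : K) (-z); rwa [neg_one_smul, neg_neg] at this)
    (by have := hr_smul (-1 : K) z; rwa [neg_one_smul] at this)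
  have hwneg : ∀ z, wA (-z) = wA z := fun z => le_antisymm
    (by have := hw_smul (-1 : K) (-z); rwa [neg_one_smul, neg_neg] at this)
    (by have := hw_smul (-1 : K) z; rwa [neg_one_smul] at this)
  have hrhneg : ∀ z, rhA (-z) = rhA z := fun z => le_antisymm
    (by have := hrh_smul (-1 : K) z; rwa [neg_one_smul] at this)
    (by have := hrh_smul (-1 : K) (-z); rwa [neg_one_smul, neg_neg] at this)
  have hwhneg : ∀ z, whA (-z) = whA z := fun z => le_antisymm
    (by have := hwh_smul (-1 : K) z; rwa [neg_one_smul] at this)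
    (by have := hwh_smul (-1 : K) (-z); rwa [neg_one_smul, neg_neg] at this)
  constructor
  · refine ⟨fun y => ?_, fun y => ?_, fun y => ?_, fun y => ?_, fun y => ?_⟩
    · obtain ⟨x, hx⟩ := hsurj y
      exact ⟨le_trans (hr x).1 (le_imSup hr1 hx), imSup_le hsurj fun x _ => (hr x).2⟩
    · obtain ⟨x, hx⟩ := hsurj y
      exact ⟨le_trans (hw x).1 (le_imSup hw1 hx), imSup_le hsurj fun x _ => (hw x).2⟩
    · obtain ⟨x, hx⟩ := hsurj y
      exact ⟨le_imInf hsurj fun x _ => (hrh x).1, le_trans (imInf_le hrh0' hx) (hrh x).2⟩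
    · obtain ⟨x, hx⟩ := hsurj y
      exact ⟨le_imInf hsurj fun x _ => (hwh x).1, le_trans (imInf_le hwh0' hx) (hwh x).2⟩
    · have h1 : imSup (⇑φ) rA y ≤ 1 - imInf (⇑φ) rhA y := imSup_le hsurj fun x hx => by
        have h2 := imInf_le hrh0' hx
        have := hsum x
        linarith
      linarith
  · refine ⟨⟨⟨?_, ?_, ?_, ?_, ?_, ?_, ?_, ?_, ?_, ?_, ?_, ?_⟩, ?_⟩, ?_⟩
    · exact fun x y => imSup_binary hsurj hr1 (B' := fun x y => x + y)
        (fun a b => map_add φ a b) hr_add x y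
    · exact fun x y => imSup_binary hsurj hw1 (B' := fun x y => x + y)
        (fun a b => map_add φ a b) hw_add x y
    · exact fun x y => imInf_binary hsurj hrh0' (B' := fun x y => x + y)
        (fun a b => map_add φ a b) hrh_add x y
    · exact fun x y => imInf_binary hsurj hwh0' (B' := fun x y => x + y)
        (fun a b => map_add φ a b) hwh_add x y
    · exact fun a x => imSup_le hsurj fun p hp =>
        le_trans (hr_smul a p) (le_imSup hr1 (by rw [map_smul, hp]))
    · exact fun a x => imSup_le hsurj fun p hp =>
        le_trans (hw_smul a p) (le_imSup hw1 (by rw [map_smul, hp]))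
    · exact fun a x => le_imInf hsurj fun p hp => le_trans
        (imInf_le hrh0' (show φ (a • p) = a • x by rw [map_smul, hp])) (hrh_smul a p)
    · exact fun a x => le_imInf hsurj fun p hp => le_trans
        (imInf_le hwh0' (show φ (a • p) = a • x by rw [map_smul, hp])) (hwh_smul a p)
    · refine le_antisymm (imSup_le hsurj fun x _ => hr1 x) ?_
      have := le_imSup hr1 (map_zero φ); rwa [hr0] at this
    · refine le_antisymm (imSup_le hsurj fun x _ => hw1 x) ?_
      have := le_imSup hw1 (map_zero φ); rwa [hw0] at this
    · refine le_antisymm ?_ (le_imInf hsurj fun x _ => hrh0' x)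
      have := imInf_le hrh0' (map_zero φ); rwa [hrh0] at this
    · refine le_antisymm ?_ (le_imInf hsurj fun x _ => hwh0' x)
      have := imInf_le hwh0' (map_zero φ); rwa [hwh0] at this
    · exact fun x0 h0 x1 h1 =>
        ⟨imSup_graded hsurj hgr hr1 (fun a ha b hb => (hAgr a ha b hb).1) h0 h1,
         imSup_graded hsurj hgr hw1 (fun a ha b hb => (hAgr a ha b hb).2.1) h0 h1,
         imInf_graded hsurj hgr hrh0' (fun a ha b hb => (hAgr a ha b hb).2.2.1) h0 h1,
         imInf_graded hsurj hgr hwh0' (fun a ha b hb => (hAgr a ha b hb).2.2.2) h0 h1⟩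
    · refine fun x y => ⟨?_, ?_, ?_, ?_⟩
      · exact imSup_binary hsurj hr1 (B' := fun x y => -(L'.bracket x y)) hanti
          (fun a b => by have := (hAbr a b).1; rwa [hrneg] at this) x y
      · exact imSup_binary hsurj hw1 (B' := fun x y => -(L'.bracket x y)) hanti
          (fun a b => by have := (hAbr a b).2.1; rwa [hwneg] at this) x y
      · exact imInf_binary hsurj hrh0' (B' := fun x y => -(L'.bracket x y)) hanti
          (fun a b => by have := (hAbr a b).2.2.1; rwa [hrhneg] at this) x y
      · exact imInf_binary hsurj hwh0' (B' := fun x y => -(L'.bracket x y)) hanti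
          (fun a b => by have := (hAbr a b).2.2.2; rwa [hwhneg] at this) x y
end
end

section
/- Let φ : V → V' be a surjective anti-homomorphism of Lie superalgebras, and let A = (λ_A, ρ_A) and B = (λ_B, ρ_B) be anti-CIF ideals of V with A homogeneous with B. Then φ(A+B) = φ(A) + φ(B), i.e., for all y ∈ V': sup_{φ(x)=y} sup_{x=a+b} {λ_A(a) ∧ λ_B(b)} = sup_{y=m+n} {λ_{φ(A)}(m) ∧ λ_{φ(B)}(n)} and inf_{φ(x)=y} inf_{x=a+b} {ρ_A(a) ∨ ρ_B(b)} = inf_{y=m+n} {ρ_{φ(A)}(m) ∨ ρ_{φ(B)}(n)}; moreover φ(A)+φ(B) is an anti-CIF ideal of V'. -/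
open scoped Classical

noncomputable section

private lemma csSup_le_csSup_exists' {S T : Set ℝ} (hS : S.Nonempty) (hT : BddAbove T)
    (h : ∀ s ∈ S, ∃ t ∈ T, s ≤ t) : sSup S ≤ sSup T :=
  csSup_le hS fun s hs => by
    obtain ⟨t, ht, hst⟩ := h s hs
    exact hst.trans (le_csSup hT ht)

private lemma csInf_le_csInf_exists' {S T : Set ℝ} (hS : S.Nonempty) (hT : BddBelow T)
    (h : ∀ s ∈ S, ∃ t ∈ T, t ≤ s) : sInf T ≤ sInf S :=
  le_csInf hS fun s hs => by
    obtain ⟨t, ht, hst⟩ := h s hs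
    exact (csInf_le hT ht).trans hst

private lemma min_csSup_le'_s17 {S T U : Set ℝ} (hS : S.Nonempty) (hT : T.Nonempty)
    (hU : BddAbove U) (h : ∀ s ∈ S, ∀ t ∈ T, ∃ u ∈ U, min s t ≤ u) :
    min (sSup S) (sSup T) ≤ sSup U := by
  by_contra hc
  push_neg at hc
  obtain ⟨s, hs, h1⟩ := exists_lt_of_lt_csSup hS (hc.trans_le (min_le_left _ _))
  obtain ⟨t, ht, h2⟩ := exists_lt_of_lt_csSup hT (hc.trans_le (min_le_right _ _))
  obtain ⟨u, hu, h3⟩ := h s hs t ht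
  exact lt_irrefl _ (((lt_min h1 h2).trans_le h3).trans_le (le_csSup hU hu))

private lemma le_max_csInf' {S T U : Set ℝ} (hS : S.Nonempty) (hT : T.Nonempty)
    (hU : BddBelow U) (h : ∀ s ∈ S, ∀ t ∈ T, ∃ u ∈ U, u ≤ max s t) :
    sInf U ≤ max (sInf S) (sInf T) := by
  by_contra hc
  push_neg at hc
  obtain ⟨s, hs, h1⟩ := exists_lt_of_csInf_lt hS ((le_max_left _ _).trans_lt hc)
  obtain ⟨t, ht, h2⟩ := exists_lt_of_csInf_lt hT ((le_max_right _ _).trans_lt hc)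
  obtain ⟨u, hu, h3⟩ := h s hs t ht
  exact lt_irrefl _ ((h3.trans_lt (max_lt h1 h2)).trans_le (csInf_le hU hu))

private lemma graded_decomp' {K V : Type*} [Field K] [AddCommGroup V] [Module K V]
    (L : LieSuper K V) (x : V) : ∃ a0 ∈ L.grade 0, ∃ a1 ∈ L.grade 1, x = a0 + a1 := by
  have htop : L.grade 0 ⊔ L.grade 1 = ⊤ := by
    rw [← L.internal.submodule_iSup_eq_top]
    refine le_antisymm (sup_le (le_iSup _ _) (le_iSup _ _)) (iSup_le fun i => ?_)
    fin_cases i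
    · exact le_sup_left
    · exact le_sup_right
  have hx : x ∈ L.grade 0 ⊔ L.grade 1 := htop ▸ Submodule.mem_top
  obtain ⟨a0, h0, a1, h1, hsum⟩ := Submodule.mem_sup.1 hx
  exact ⟨a0, h0, a1, h1, hsum.symm⟩

private lemma graded_unique' {K V : Type*} [Field K] [AddCommGroup V] [Module K V]
    (L : LieSuper K V) {p0 p1 q0 q1 : V}
    (h0 : p0 ∈ L.grade 0) (h1 : p1 ∈ L.grade 1) (k0 : q0 ∈ L.grade 0) (k1 : q1 ∈ L.grade 1)
    (heq : p0 + p1 = q0 + q1) : p0 = q0 ∧ p1 = q1 := by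
  have hdisj : Disjoint (L.grade 0) (L.grade 1) :=
    L.internal.submodule_iSupIndep.pairwiseDisjoint (by decide)
  have hd : p0 - q0 = q1 - p1 := by
    rw [sub_eq_sub_iff_add_eq_add]
    rw [heq]; abel
  have e1 : p0 - q0 ∈ L.grade 0 := sub_mem h0 k0
  have e2 : p0 - q0 ∈ L.grade 1 := hd ▸ sub_mem k1 h1
  have hz := Submodule.disjoint_def.1 hdisj _ e1 e2
  have hp : p0 = q0 := sub_eq_zero.1 hz
  refine ⟨hp, ?_⟩
  have := heq
  rw [hp] at this
  exact add_left_cancel this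

private lemma supSide {K V V' : Type*} [Field K]
    [AddCommGroup V] [Module K V] [AddCommGroup V'] [Module K V']
    (L : LieSuper K V) (L' : LieSuper K V') (φ : V →ₗ[K] V')
    (hsurj : Function.Surjective φ)
    (hgr : ∀ i : ZMod 2, ∀ x ∈ L.grade i, φ x ∈ L'.grade i)
    (hanti : ∀ x y : V, φ (L.bracket x y) = -(L'.bracket (φ x) (φ y)))
    (f g : V → ℝ)
    (hfb : ∀ x, f x ∈ Set.Icc (0:ℝ) 1) (hgb : ∀ x, g x ∈ Set.Icc (0:ℝ) 1)
    (hfadd : ∀ x y, min (f x) (f y) ≤ f (x + y)) (hgadd : ∀ x y, min (g x) (g y) ≤ g (x + y))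
    (hfsmul : ∀ (k : K) (x : V), f x ≤ f (k • x)) (hgsmul : ∀ (k : K) (x : V), g x ≤ g (k • x))
    (hf0 : f 0 = 1) (hg0 : g 0 = 1)
    (hfgr : ∀ x0 ∈ L.grade 0, ∀ x1 ∈ L.grade 1, f (x0 + x1) = min (f x0) (f x1))
    (hggr : ∀ x0 ∈ L.grade 0, ∀ x1 ∈ L.grade 1, g (x0 + x1) = min (g x0) (g x1))
    (hfbr : ∀ x y, max (f x) (f y) ≤ f (-(L.bracket x y)))
    (hgbr : ∀ x y, max (g x) (g y) ≤ g (-(L.bracket x y))) :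
    (∀ y, imSup (⇑φ) (sumSup f g) y = sumSup (imSup (⇑φ) f) (imSup (⇑φ) g) y) ∧
    (∀ x y, min (sumSup (imSup (⇑φ) f) (imSup (⇑φ) g) x) (sumSup (imSup (⇑φ) f) (imSup (⇑φ) g) y)
        ≤ sumSup (imSup (⇑φ) f) (imSup (⇑φ) g) (x + y)) ∧
    (∀ (k : K) (x : V'), sumSup (imSup (⇑φ) f) (imSup (⇑φ) g) x
        ≤ sumSup (imSup (⇑φ) f) (imSup (⇑φ) g) (k • x)) ∧
    sumSup (imSup (⇑φ) f) (imSup (⇑φ) g) 0 = 1 ∧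
    (∀ x0 ∈ L'.grade 0, ∀ x1 ∈ L'.grade 1, sumSup (imSup (⇑φ) f) (imSup (⇑φ) g) (x0 + x1)
        = min (sumSup (imSup (⇑φ) f) (imSup (⇑φ) g) x0) (sumSup (imSup (⇑φ) f) (imSup (⇑φ) g) x1)) ∧
    (∀ x y, max (sumSup (imSup (⇑φ) f) (imSup (⇑φ) g) x) (sumSup (imSup (⇑φ) f) (imSup (⇑φ) g) y)
        ≤ sumSup (imSup (⇑φ) f) (imSup (⇑φ) g) (-(L'.bracket x y))) := by
  set P : V' → Set ℝ := fun y => {t | ∃ a b, φ a + φ b = y ∧ t = min (f a) (g b)} with hP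
  have hPsub : ∀ y, P y ⊆ Set.Icc (0:ℝ) 1 := by
    rintro y t ⟨a, b, -, rfl⟩
    exact ⟨le_min (hfb a).1 (hgb b).1, (min_le_left _ _).trans (hfb a).2⟩
  have hPbdd : ∀ y, BddAbove (P y) := fun y => ⟨1, fun t ht => (hPsub y ht).2⟩
  have hPne : ∀ y, (P y).Nonempty := by
    intro y
    obtain ⟨x, hx⟩ := hsurj y
    exact ⟨min (f x) (g 0), x, 0, by simp [hx], rfl⟩
  have fneg : ∀ x, f (-x) = f x := by
    have h1 : ∀ z, f z ≤ f (-z) := fun z => by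
      have := hfsmul (-1 : K) z; rwa [neg_one_smul] at this
    exact fun x => le_antisymm (by simpa using h1 (-x)) (h1 x)
  have gneg : ∀ x, g (-x) = g x := by
    have h1 : ∀ z, g z ≤ g (-z) := fun z => by
      have := hgsmul (-1 : K) z; rwa [neg_one_smul] at this
    exact fun x => le_antisymm (by simpa using h1 (-x)) (h1 x)
  -- image sets
  have hIfne : ∀ m : V', {t | ∃ x, φ x = m ∧ t = f x}.Nonempty := fun m => by
    obtain ⟨x, hx⟩ := hsurj m; exact ⟨f x, x, hx, rfl⟩
  have hIgne : ∀ m : V', {t | ∃ x, φ x = m ∧ t = g x}.Nonempty := fun m => by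
    obtain ⟨x, hx⟩ := hsurj m; exact ⟨g x, x, hx, rfl⟩
  have hIfbdd : ∀ m : V', BddAbove {t | ∃ x, φ x = m ∧ t = f x} := fun m =>
    ⟨1, by rintro t ⟨x, -, rfl⟩; exact (hfb x).2⟩
  have hIgbdd : ∀ m : V', BddAbove {t | ∃ x, φ x = m ∧ t = g x} := fun m =>
    ⟨1, by rintro t ⟨x, -, rfl⟩; exact (hgb x).2⟩
  have hIfle1 : ∀ m, imSup (⇑φ) f m ≤ 1 := fun m => by
    rw [imSup]; exact csSup_le (hIfne m) (by rintro t ⟨x, -, rfl⟩; exact (hfb x).2)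
  have hIgle1 : ∀ m, imSup (⇑φ) g m ≤ 1 := fun m => by
    rw [imSup]; exact csSup_le (hIgne m) (by rintro t ⟨x, -, rfl⟩; exact (hgb x).2)
  have hfIm : ∀ a : V, f a ≤ imSup (⇑φ) f (φ a) := fun a => by
    rw [imSup]; exact le_csSup (hIfbdd _) ⟨a, rfl, rfl⟩
  have hgIm : ∀ b : V, g b ≤ imSup (⇑φ) g (φ b) := fun b => by
    rw [imSup]; exact le_csSup (hIgbdd _) ⟨b, rfl, rfl⟩
  -- the key representation
  have hR : ∀ y, sumSup (imSup (⇑φ) f) (imSup (⇑φ) g) y = sSup (P y) := by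
    intro y
    rw [sumSup]
    have hQne : {t | ∃ a b, y = a + b ∧ t = min (imSup (⇑φ) f a) (imSup (⇑φ) g b)}.Nonempty :=
      ⟨min (imSup (⇑φ) f y) (imSup (⇑φ) g 0), y, 0, (add_zero y).symm, rfl⟩
    have hQbdd : BddAbove {t | ∃ a b, y = a + b ∧ t = min (imSup (⇑φ) f a) (imSup (⇑φ) g b)} :=
      ⟨1, by rintro t ⟨m, n, -, rfl⟩; exact (min_le_left _ _).trans (hIfle1 m)⟩
    refine le_antisymm (csSup_le hQne ?_) (csSup_le (hPne y) ?_)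
    · rintro t ⟨m, n, hy, rfl⟩
      rw [imSup, imSup]
      refine min_csSup_le'_s17 (hIfne m) (hIgne n) (hPbdd y) ?_
      rintro s ⟨a, ha, rfl⟩ u ⟨b, hb, rfl⟩
      exact ⟨min (f a) (g b), ⟨a, b, by rw [ha, hb, hy], rfl⟩, le_rfl⟩
    · rintro t ⟨a, b, hab, rfl⟩
      calc min (f a) (g b) ≤ min (imSup (⇑φ) f (φ a)) (imSup (⇑φ) g (φ b)) :=
            min_le_min (hfIm a) (hgIm b)
        _ ≤ _ := le_csSup hQbdd ⟨φ a, φ b, hab.symm, rfl⟩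
  have hsum_ne : ∀ x : V, {t | ∃ a b, x = a + b ∧ t = min (f a) (g b)}.Nonempty :=
    fun x => ⟨min (f x) (g 0), x, 0, (add_zero x).symm, rfl⟩
  have hsum_bdd : ∀ x : V, BddAbove {t | ∃ a b, x = a + b ∧ t = min (f a) (g b)} :=
    fun x => ⟨1, by rintro t ⟨a, b, -, rfl⟩; exact (min_le_left _ _).trans (hfb a).2⟩
  have hsum_le1 : ∀ x : V, sumSup f g x ≤ 1 := fun x => by
    rw [sumSup]
    exact csSup_le (hsum_ne x) (by rintro t ⟨a, b, -, rfl⟩; exact (min_le_left _ _).trans (hfb a).2)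
  have hI : ∀ y, imSup (⇑φ) (sumSup f g) y = sSup (P y) := by
    intro y
    rw [imSup]
    have hIne : {t | ∃ x, φ x = y ∧ t = sumSup f g x}.Nonempty := by
      obtain ⟨x, hx⟩ := hsurj y; exact ⟨sumSup f g x, x, hx, rfl⟩
    have hIbdd : BddAbove {t | ∃ x, φ x = y ∧ t = sumSup f g x} :=
      ⟨1, by rintro t ⟨x, -, rfl⟩; exact hsum_le1 x⟩
    refine le_antisymm (csSup_le hIne ?_) (csSup_le (hPne y) ?_)
    · rintro t ⟨x, hx, rfl⟩
      rw [sumSup]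
      refine csSup_le (hsum_ne x) ?_
      rintro t ⟨a, b, hx', rfl⟩
      exact le_csSup (hPbdd y) ⟨a, b, by rw [← map_add, ← hx', hx], rfl⟩
    · rintro t ⟨a, b, hab, rfl⟩
      have h1 : min (f a) (g b) ≤ sumSup f g (a + b) := by
        rw [sumSup]; exact le_csSup (hsum_bdd _) ⟨a, b, rfl, rfl⟩
      exact h1.trans (le_csSup hIbdd ⟨a + b, by rw [map_add, hab], rfl⟩)
  have haddR : ∀ x y : V', min (sSup (P x)) (sSup (P y)) ≤ sSup (P (x + y)) := by
    intro x y
    refine min_csSup_le'_s17 (hPne x) (hPne y) (hPbdd _) ?_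
    rintro s ⟨a, b, hab, rfl⟩ t ⟨c, d, hcd, rfl⟩
    refine ⟨min (f (a + c)) (g (b + d)), ⟨a + c, b + d, ?_, rfl⟩, ?_⟩
    · rw [map_add, map_add, ← hab, ← hcd]; abel
    · exact le_min ((min_le_min (min_le_left _ _) (min_le_left _ _)).trans (hfadd a c))
        ((min_le_min (min_le_right _ _) (min_le_right _ _)).trans (hgadd b d))
  refine ⟨fun y => by rw [hI, hR], fun x y => by rw [hR, hR, hR]; exact haddR x y,
    ?_, ?_, ?_, ?_⟩
  · -- smul
    intro k x
    rw [hR, hR]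
    refine csSup_le_csSup_exists' (hPne x) (hPbdd _) ?_
    rintro s ⟨a, b, hab, rfl⟩
    exact ⟨min (f (k • a)) (g (k • b)),
      ⟨k • a, k • b, by rw [map_smul, map_smul, ← smul_add, hab], rfl⟩,
      min_le_min (hfsmul k a) (hgsmul k b)⟩
  · -- value at 0
    rw [hR]
    refine le_antisymm (csSup_le (hPne 0) fun t ht => (hPsub 0 ht).2)
      (le_csSup (hPbdd 0) ⟨0, 0, by simp, by rw [hf0, hg0, min_self]⟩)
  · -- graded
    intro x0 h0 x1 h1
    rw [hR, hR, hR]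
    refine le_antisymm (csSup_le (hPne _) ?_) (haddR x0 x1)
    rintro t ⟨a, b, hab, rfl⟩
    obtain ⟨a0, ha0, a1, ha1, rfl⟩ := graded_decomp' L a
    obtain ⟨b0, hb0, b1, hb1, rfl⟩ := graded_decomp' L b
    have hmem0 : φ a0 + φ b0 ∈ L'.grade 0 := add_mem (hgr 0 a0 ha0) (hgr 0 b0 hb0)
    have hmem1 : φ a1 + φ b1 ∈ L'.grade 1 := add_mem (hgr 1 a1 ha1) (hgr 1 b1 hb1)
    have hsum : (φ a0 + φ b0) + (φ a1 + φ b1) = x0 + x1 := by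
      rw [← hab, map_add, map_add]; abel
    obtain ⟨he0, he1⟩ := graded_unique' L' hmem0 hmem1 h0 h1 hsum
    have hta : f (a0 + a1) = min (f a0) (f a1) := hfgr a0 ha0 a1 ha1
    have htb : g (b0 + b1) = min (g b0) (g b1) := hggr b0 hb0 b1 hb1
    rw [hta, htb]
    refine le_min ?_ ?_
    · refine le_trans (le_min ((min_le_left _ _).trans (min_le_left _ _))
        ((min_le_right _ _).trans (min_le_left _ _))) ?_
      exact le_csSup (hPbdd x0) ⟨a0, b0, he0, rfl⟩
    · refine le_trans (le_min ((min_le_left _ _).trans (min_le_right _ _))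
        ((min_le_right _ _).trans (min_le_right _ _))) ?_
      exact le_csSup (hPbdd x1) ⟨a1, b1, he1, rfl⟩
  · -- bracket
    intro x y
    rw [hR, hR, hR]
    refine max_le ?_ ?_
    · refine csSup_le_csSup_exists' (hPne x) (hPbdd _) ?_
      rintro s ⟨a, b, hab, rfl⟩
      obtain ⟨c, hc⟩ := hsurj y
      refine ⟨min (f (L.bracket a c)) (g (L.bracket b c)),
        ⟨L.bracket a c, L.bracket b c, ?_, rfl⟩, ?_⟩
      · rw [hanti, hanti, hc, ← hab, map_add, LinearMap.add_apply, neg_add]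
      · exact min_le_min ((le_max_left _ _).trans ((hfbr a c).trans_eq (fneg _)))
          ((le_max_left _ _).trans ((hgbr b c).trans_eq (gneg _)))
    · refine csSup_le_csSup_exists' (hPne y) (hPbdd _) ?_
      rintro s ⟨c, d, hcd, rfl⟩
      obtain ⟨e, he⟩ := hsurj x
      refine ⟨min (f (L.bracket e c)) (g (L.bracket e d)),
        ⟨L.bracket e c, L.bracket e d, ?_, rfl⟩, ?_⟩
      · rw [hanti, hanti, he, ← hcd, map_add, neg_add]
      · exact min_le_min ((le_max_right _ _).trans ((hfbr e c).trans_eq (fneg _)))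
          ((le_max_right _ _).trans ((hgbr e d).trans_eq (gneg _)))

private lemma infSide {K V V' : Type*} [Field K]
    [AddCommGroup V] [Module K V] [AddCommGroup V'] [Module K V']
    (L : LieSuper K V) (L' : LieSuper K V') (φ : V →ₗ[K] V')
    (hsurj : Function.Surjective φ)
    (hgr : ∀ i : ZMod 2, ∀ x ∈ L.grade i, φ x ∈ L'.grade i)
    (hanti : ∀ x y : V, φ (L.bracket x y) = -(L'.bracket (φ x) (φ y)))
    (f g : V → ℝ)
    (hfb : ∀ x, f x ∈ Set.Icc (0:ℝ) 1) (hgb : ∀ x, g x ∈ Set.Icc (0:ℝ) 1)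
    (hfadd : ∀ x y, f (x + y) ≤ max (f x) (f y)) (hgadd : ∀ x y, g (x + y) ≤ max (g x) (g y))
    (hfsmul : ∀ (k : K) (x : V), f (k • x) ≤ f x) (hgsmul : ∀ (k : K) (x : V), g (k • x) ≤ g x)
    (hf0 : f 0 = 0) (hg0 : g 0 = 0)
    (hfgr : ∀ x0 ∈ L.grade 0, ∀ x1 ∈ L.grade 1, f (x0 + x1) = max (f x0) (f x1))
    (hggr : ∀ x0 ∈ L.grade 0, ∀ x1 ∈ L.grade 1, g (x0 + x1) = max (g x0) (g x1))
    (hfbr : ∀ x y, f (-(L.bracket x y)) ≤ min (f x) (f y))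
    (hgbr : ∀ x y, g (-(L.bracket x y)) ≤ min (g x) (g y)) :
    (∀ y, imInf (⇑φ) (sumInf f g) y = sumInf (imInf (⇑φ) f) (imInf (⇑φ) g) y) ∧
    (∀ x y, sumInf (imInf (⇑φ) f) (imInf (⇑φ) g) (x + y)
        ≤ max (sumInf (imInf (⇑φ) f) (imInf (⇑φ) g) x) (sumInf (imInf (⇑φ) f) (imInf (⇑φ) g) y)) ∧
    (∀ (k : K) (x : V'), sumInf (imInf (⇑φ) f) (imInf (⇑φ) g) (k • x)
        ≤ sumInf (imInf (⇑φ) f) (imInf (⇑φ) g) x) ∧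
    sumInf (imInf (⇑φ) f) (imInf (⇑φ) g) 0 = 0 ∧
    (∀ x0 ∈ L'.grade 0, ∀ x1 ∈ L'.grade 1, sumInf (imInf (⇑φ) f) (imInf (⇑φ) g) (x0 + x1)
        = max (sumInf (imInf (⇑φ) f) (imInf (⇑φ) g) x0) (sumInf (imInf (⇑φ) f) (imInf (⇑φ) g) x1)) ∧
    (∀ x y, sumInf (imInf (⇑φ) f) (imInf (⇑φ) g) (-(L'.bracket x y))
        ≤ min (sumInf (imInf (⇑φ) f) (imInf (⇑φ) g) x) (sumInf (imInf (⇑φ) f) (imInf (⇑φ) g) y)) := by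
  set P : V' → Set ℝ := fun y => {t | ∃ a b, φ a + φ b = y ∧ t = max (f a) (g b)} with hP
  have hPsub : ∀ y, P y ⊆ Set.Icc (0:ℝ) 1 := by
    rintro y t ⟨a, b, -, rfl⟩
    exact ⟨(hfb a).1.trans (le_max_left _ _), max_le (hfb a).2 (hgb b).2⟩
  have hPbdd : ∀ y, BddBelow (P y) := fun y => ⟨0, fun t ht => (hPsub y ht).1⟩
  have hPne : ∀ y, (P y).Nonempty := by
    intro y
    obtain ⟨x, hx⟩ := hsurj y
    exact ⟨max (f x) (g 0), x, 0, by simp [hx], rfl⟩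
  have fneg : ∀ x, f (-x) = f x := by
    have h1 : ∀ z, f (-z) ≤ f z := fun z => by
      have := hfsmul (-1 : K) z; rwa [neg_one_smul] at this
    exact fun x => le_antisymm (h1 x) (by simpa using h1 (-x))
  have gneg : ∀ x, g (-x) = g x := by
    have h1 : ∀ z, g (-z) ≤ g z := fun z => by
      have := hgsmul (-1 : K) z; rwa [neg_one_smul] at this
    exact fun x => le_antisymm (h1 x) (by simpa using h1 (-x))
  have hIfne : ∀ m : V', {t | ∃ x, φ x = m ∧ t = f x}.Nonempty := fun m => by
    obtain ⟨x, hx⟩ := hsurj m; exact ⟨f x, x, hx, rfl⟩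
  have hIgne : ∀ m : V', {t | ∃ x, φ x = m ∧ t = g x}.Nonempty := fun m => by
    obtain ⟨x, hx⟩ := hsurj m; exact ⟨g x, x, hx, rfl⟩
  have hIfbdd : ∀ m : V', BddBelow {t | ∃ x, φ x = m ∧ t = f x} := fun m =>
    ⟨0, by rintro t ⟨x, -, rfl⟩; exact (hfb x).1⟩
  have hIgbdd : ∀ m : V', BddBelow {t | ∃ x, φ x = m ∧ t = g x} := fun m =>
    ⟨0, by rintro t ⟨x, -, rfl⟩; exact (hgb x).1⟩
  have hIf0 : ∀ m, 0 ≤ imInf (⇑φ) f m := fun m => by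
    rw [imInf]; exact le_csInf (hIfne m) (by rintro t ⟨x, -, rfl⟩; exact (hfb x).1)
  have hIg0 : ∀ m, 0 ≤ imInf (⇑φ) g m := fun m => by
    rw [imInf]; exact le_csInf (hIgne m) (by rintro t ⟨x, -, rfl⟩; exact (hgb x).1)
  have hfIm : ∀ a : V, imInf (⇑φ) f (φ a) ≤ f a := fun a => by
    rw [imInf]; exact csInf_le (hIfbdd _) ⟨a, rfl, rfl⟩
  have hgIm : ∀ b : V, imInf (⇑φ) g (φ b) ≤ g b := fun b => by
    rw [imInf]; exact csInf_le (hIgbdd _) ⟨b, rfl, rfl⟩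
  have hR : ∀ y, sumInf (imInf (⇑φ) f) (imInf (⇑φ) g) y = sInf (P y) := by
    intro y
    rw [sumInf]
    have hQne : {t | ∃ a b, y = a + b ∧ t = max (imInf (⇑φ) f a) (imInf (⇑φ) g b)}.Nonempty :=
      ⟨max (imInf (⇑φ) f y) (imInf (⇑φ) g 0), y, 0, (add_zero y).symm, rfl⟩
    have hQbdd : BddBelow {t | ∃ a b, y = a + b ∧ t = max (imInf (⇑φ) f a) (imInf (⇑φ) g b)} :=
      ⟨0, by rintro t ⟨m, n, -, rfl⟩; exact (hIf0 m).trans (le_max_left _ _)⟩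
    refine le_antisymm (le_csInf (hPne y) ?_) (le_csInf hQne ?_)
    · rintro t ⟨a, b, hab, rfl⟩
      calc sInf {t | ∃ a b, y = a + b ∧ t = max (imInf (⇑φ) f a) (imInf (⇑φ) g b)}
          ≤ max (imInf (⇑φ) f (φ a)) (imInf (⇑φ) g (φ b)) :=
            csInf_le hQbdd ⟨φ a, φ b, hab.symm, rfl⟩
        _ ≤ max (f a) (g b) := max_le_max (hfIm a) (hgIm b)
    · rintro t ⟨m, n, hy, rfl⟩
      rw [imInf, imInf]
      refine le_max_csInf' (hIfne m) (hIgne n) (hPbdd y) ?_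
      rintro s ⟨a, ha, rfl⟩ u ⟨b, hb, rfl⟩
      exact ⟨max (f a) (g b), ⟨a, b, by rw [ha, hb, hy], rfl⟩, le_rfl⟩
  have hsum_ne : ∀ x : V, {t | ∃ a b, x = a + b ∧ t = max (f a) (g b)}.Nonempty :=
    fun x => ⟨max (f x) (g 0), x, 0, (add_zero x).symm, rfl⟩
  have hsum_bdd : ∀ x : V, BddBelow {t | ∃ a b, x = a + b ∧ t = max (f a) (g b)} :=
    fun x => ⟨0, by rintro t ⟨a, b, -, rfl⟩; exact (hfb a).1.trans (le_max_left _ _)⟩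
  have hsum_ge0 : ∀ x : V, 0 ≤ sumInf f g x := fun x => by
    rw [sumInf]
    exact le_csInf (hsum_ne x)
      (by rintro t ⟨a, b, -, rfl⟩; exact (hfb a).1.trans (le_max_left _ _))
  have hI : ∀ y, imInf (⇑φ) (sumInf f g) y = sInf (P y) := by
    intro y
    rw [imInf]
    have hIne : {t | ∃ x, φ x = y ∧ t = sumInf f g x}.Nonempty := by
      obtain ⟨x, hx⟩ := hsurj y; exact ⟨sumInf f g x, x, hx, rfl⟩
    have hIbdd : BddBelow {t | ∃ x, φ x = y ∧ t = sumInf f g x} :=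
      ⟨0, by rintro t ⟨x, -, rfl⟩; exact hsum_ge0 x⟩
    refine le_antisymm (le_csInf (hPne y) ?_) (le_csInf hIne ?_)
    · rintro t ⟨a, b, hab, rfl⟩
      have h1 : sumInf f g (a + b) ≤ max (f a) (g b) := by
        rw [sumInf]; exact csInf_le (hsum_bdd _) ⟨a, b, rfl, rfl⟩
      exact (csInf_le hIbdd ⟨a + b, by rw [map_add, hab], rfl⟩).trans h1
    · rintro t ⟨x, hx, rfl⟩
      rw [sumInf]
      refine le_csInf (hsum_ne x) ?_
      rintro t ⟨a, b, hx', rfl⟩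
      exact csInf_le (hPbdd y) ⟨a, b, by rw [← map_add, ← hx', hx], rfl⟩
  have haddR : ∀ x y : V', sInf (P (x + y)) ≤ max (sInf (P x)) (sInf (P y)) := by
    intro x y
    refine le_max_csInf' (hPne x) (hPne y) (hPbdd _) ?_
    rintro s ⟨a, b, hab, rfl⟩ t ⟨c, d, hcd, rfl⟩
    refine ⟨max (f (a + c)) (g (b + d)), ⟨a + c, b + d, ?_, rfl⟩, ?_⟩
    · rw [map_add, map_add, ← hab, ← hcd]; abel
    · exact max_le ((hfadd a c).trans (max_le_max (le_max_left _ _) (le_max_left _ _)))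
        ((hgadd b d).trans (max_le_max (le_max_right _ _) (le_max_right _ _)))
  refine ⟨fun y => by rw [hI, hR], fun x y => by rw [hR, hR, hR]; exact haddR x y,
    ?_, ?_, ?_, ?_⟩
  · intro k x
    rw [hR, hR]
    refine csInf_le_csInf_exists' (hPne x) (hPbdd _) ?_
    rintro s ⟨a, b, hab, rfl⟩
    exact ⟨max (f (k • a)) (g (k • b)),
      ⟨k • a, k • b, by rw [map_smul, map_smul, ← smul_add, hab], rfl⟩,
      max_le_max (hfsmul k a) (hgsmul k b)⟩
  · rw [hR]
    refine le_antisymm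
      (csInf_le (hPbdd 0) ⟨0, 0, by simp, by rw [hf0, hg0, max_self]⟩)
      (le_csInf (hPne 0) fun t ht => (hPsub 0 ht).1)
  · intro x0 h0 x1 h1
    rw [hR, hR, hR]
    refine le_antisymm (haddR x0 x1) (le_csInf (hPne _) ?_)
    rintro t ⟨a, b, hab, rfl⟩
    obtain ⟨a0, ha0, a1, ha1, rfl⟩ := graded_decomp' L a
    obtain ⟨b0, hb0, b1, hb1, rfl⟩ := graded_decomp' L b
    have hmem0 : φ a0 + φ b0 ∈ L'.grade 0 := add_mem (hgr 0 a0 ha0) (hgr 0 b0 hb0)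
    have hmem1 : φ a1 + φ b1 ∈ L'.grade 1 := add_mem (hgr 1 a1 ha1) (hgr 1 b1 hb1)
    have hsum : (φ a0 + φ b0) + (φ a1 + φ b1) = x0 + x1 := by
      rw [← hab, map_add, map_add]; abel
    obtain ⟨he0, he1⟩ := graded_unique' L' hmem0 hmem1 h0 h1 hsum
    have hta : f (a0 + a1) = max (f a0) (f a1) := hfgr a0 ha0 a1 ha1
    have htb : g (b0 + b1) = max (g b0) (g b1) := hggr b0 hb0 b1 hb1
    rw [hta, htb]
    refine max_le ?_ ?_
    · refine le_trans (csInf_le (hPbdd x0) ⟨a0, b0, he0, rfl⟩) ?_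
      exact max_le ((le_max_left _ _).trans (le_max_left _ _))
        ((le_max_left _ _).trans (le_max_right _ _))
    · refine le_trans (csInf_le (hPbdd x1) ⟨a1, b1, he1, rfl⟩) ?_
      exact max_le ((le_max_right _ _).trans (le_max_left _ _))
        ((le_max_right _ _).trans (le_max_right _ _))
  · intro x y
    rw [hR, hR, hR]
    refine le_min ?_ ?_
    · refine csInf_le_csInf_exists' (hPne x) (hPbdd _) ?_
      rintro s ⟨a, b, hab, rfl⟩
      obtain ⟨c, hc⟩ := hsurj y
      refine ⟨max (f (L.bracket a c)) (g (L.bracket b c)),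
        ⟨L.bracket a c, L.bracket b c, ?_, rfl⟩, ?_⟩
      · rw [hanti, hanti, hc, ← hab, map_add, LinearMap.add_apply, neg_add]
      · exact max_le_max (((fneg _).symm.trans_le (hfbr a c)).trans (min_le_left _ _))
          (((gneg _).symm.trans_le (hgbr b c)).trans (min_le_left _ _))
    · refine csInf_le_csInf_exists' (hPne y) (hPbdd _) ?_
      rintro s ⟨c, d, hcd, rfl⟩
      obtain ⟨e, he⟩ := hsurj x
      refine ⟨max (f (L.bracket e c)) (g (L.bracket e d)),
        ⟨L.bracket e c, L.bracket e d, ?_, rfl⟩, ?_⟩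
      · rw [hanti, hanti, he, ← hcd, map_add, neg_add]
      · exact max_le_max (((fneg _).symm.trans_le (hfbr e c)).trans (min_le_right _ _))
          (((gneg _).symm.trans_le (hgbr e d)).trans (min_le_right _ _))

/-- for a surjective anti-homomorphism `φ` and anti-CIF ideals `A, B` of `V`
with `A` homogeneous with `B`, `φ(A+B) = φ(A) + φ(B)` (componentwise), and
`φ(A) + φ(B)` is an anti-CIF ideal of `V'`. -/
theorem image_sum_antiCIFIdeal {K V V' : Type*} [Field K]
    [AddCommGroup V] [Module K V] [AddCommGroup V'] [Module K V']
    (L : LieSuper K V) (L' : LieSuper K V') (φ : V →ₗ[K] V')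
    (hsurj : Function.Surjective φ)
    (hgr : ∀ i : ZMod 2, ∀ x ∈ L.grade i, φ x ∈ L'.grade i)
    (hanti : ∀ x y : V, φ (L.bracket x y) = -(L'.bracket (φ x) (φ y)))
    (rA wA rhA whA rB wB rhB whB : V → ℝ)
    (hASet : IsCIFSet rA wA rhA whA) (hBSet : IsCIFSet rB wB rhB whB)
    (hA : IsAntiCIFLieIdeal L rA wA rhA whA) (hB : IsAntiCIFLieIdeal L rB wB rhB whB)
    (hhom : Homog rA wA rhA whA rB wB rhB whB) :
    (∀ y : V', imSup (⇑φ) (sumSup rA rB) y = sumSup (imSup (⇑φ) rA) (imSup (⇑φ) rB) y) ∧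
    (∀ y : V', imSup (⇑φ) (sumSup wA wB) y = sumSup (imSup (⇑φ) wA) (imSup (⇑φ) wB) y) ∧
    (∀ y : V', imInf (⇑φ) (sumInf rhA rhB) y = sumInf (imInf (⇑φ) rhA) (imInf (⇑φ) rhB) y) ∧
    (∀ y : V', imInf (⇑φ) (sumInf whA whB) y = sumInf (imInf (⇑φ) whA) (imInf (⇑φ) whB) y) ∧
    IsAntiCIFLieIdeal L' (sumSup (imSup (⇑φ) rA) (imSup (⇑φ) rB))
      (sumSup (imSup (⇑φ) wA) (imSup (⇑φ) wB))
      (sumInf (imInf (⇑φ) rhA) (imInf (⇑φ) rhB))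
      (sumInf (imInf (⇑φ) whA) (imInf (⇑φ) whB)) := by

  obtain ⟨hrAb, hwAb, hrhAb, hwhAb, -⟩ := hASet
  obtain ⟨hrBb, hwBb, hrhBb, hwhBb, -⟩ := hBSet
  obtain ⟨⟨⟨arA, awA, arhA, awhA, srA, swA, srhA, swhA, zrA, zwA, zrhA, zwhA⟩, grA⟩, brA⟩ := hA
  obtain ⟨⟨⟨arB, awB, arhB, awhB, srB, swB, srhB, swhB, zrB, zwB, zrhB, zwhB⟩, grB⟩, brB⟩ := hB
  obtain ⟨e1, add1, smul1, zero1, graded1, br1⟩ :=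
    supSide L L' φ hsurj hgr hanti rA rB hrAb hrBb arA arB srA srB zrA zrB
      (fun x0 h0 x1 h1 => (grA x0 h0 x1 h1).1) (fun x0 h0 x1 h1 => (grB x0 h0 x1 h1).1)
      (fun x y => (brA x y).1) (fun x y => (brB x y).1)
  obtain ⟨e2, add2, smul2, zero2, graded2, br2⟩ :=
    supSide L L' φ hsurj hgr hanti wA wB hwAb hwBb awA awB swA swB zwA zwB
      (fun x0 h0 x1 h1 => (grA x0 h0 x1 h1).2.1) (fun x0 h0 x1 h1 => (grB x0 h0 x1 h1).2.1)
      (fun x y => (brA x y).2.1) (fun x y => (brB x y).2.1)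
  obtain ⟨e3, add3, smul3, zero3, graded3, br3⟩ :=
    infSide L L' φ hsurj hgr hanti rhA rhB hrhAb hrhBb arhA arhB srhA srhB zrhA zrhB
      (fun x0 h0 x1 h1 => (grA x0 h0 x1 h1).2.2.1) (fun x0 h0 x1 h1 => (grB x0 h0 x1 h1).2.2.1)
      (fun x y => (brA x y).2.2.1) (fun x y => (brB x y).2.2.1)
  obtain ⟨e4, add4, smul4, zero4, graded4, br4⟩ :=
    infSide L L' φ hsurj hgr hanti whA whB hwhAb hwhBb awhA awhB swhA swhB zwhA zwhB
      (fun x0 h0 x1 h1 => (grA x0 h0 x1 h1).2.2.2) (fun x0 h0 x1 h1 => (grB x0 h0 x1 h1).2.2.2)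
      (fun x y => (brA x y).2.2.2) (fun x y => (brB x y).2.2.2)
  refine ⟨e1, e2, e3, e4,
    ⟨⟨add1, add2, add3, add4, smul1, smul2, smul3, smul4, zero1, zero2, zero3, zero4⟩,
      fun x0 h0 x1 h1 => ⟨graded1 x0 h0 x1 h1, graded2 x0 h0 x1 h1,
        graded3 x0 h0 x1 h1, graded4 x0 h0 x1 h1⟩⟩,
    fun x y => ⟨br1 x y, br2 x y, br3 x y, br4 x y⟩⟩
end
end

section
/- Let V = V₀ ⊕ V₁ be a Z₂-graded vector space and A = (λ_A, ρ_A) a Z₂-graded CIF vector subspace of V, so A = A₀ ⊕ A₁ with A₀, A₁ CIF subspaces of V₀, V₁ and extensions 𝔞₀, 𝔞₁ to V satisfying 𝔞₀ ∩ 𝔞₁ = (0,1) away from 0. Then for every x ∈ V with graded decomposition x = x₀ + x₁ (x₀ ∈ V₀, x₁ ∈ V₁), λ_A(x) = λ_{A₀}(x₀) ∧ λ_{A₁}(x₁). -/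
open scoped Classical

noncomputable section

/-- if `A = A₀ ⊕ A₁` is a `Z₂`-graded CIF vector subspace of
`V = V₀ ⊕ V₁` (i.e. `A` is the direct sum of the extensions `𝔞₀, 𝔞₁` of CIF vector
subspaces `A₀, A₁` of `V₀, V₁`), then for `x = x₀ + x₁` with `x₀ ∈ V₀, x₁ ∈ V₁` one has
`λ_A(x) = λ_{A₀}(x₀) ∧ λ_{A₁}(x₁)`. -/
theorem graded_cif_membership_formula {K V : Type*} [Field K] [AddCommGroup V] [Module K V]
    (V0 V1 : Submodule K V)
    (hdir : ∀ v : V, ∃! p : V0 × V1, ((p.1 : V) + (p.2 : V) = v))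
    (r0 w0 rh0 wh0 r1 w1 rh1 wh1 : V → ℝ)
    (hb : ∀ x : V, r0 x ∈ Set.Icc (0:ℝ) 1 ∧ w0 x ∈ Set.Icc (0:ℝ) 1 ∧
      rh0 x ∈ Set.Icc (0:ℝ) 1 ∧ wh0 x ∈ Set.Icc (0:ℝ) 1 ∧
      r1 x ∈ Set.Icc (0:ℝ) 1 ∧ w1 x ∈ Set.Icc (0:ℝ) 1 ∧
      rh1 x ∈ Set.Icc (0:ℝ) 1 ∧ wh1 x ∈ Set.Icc (0:ℝ) 1)
    -- `A₀` is a CIF vector subspace of `V₀`: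
    (hA0add : ∀ x ∈ V0, ∀ y ∈ V0, min (r0 x) (r0 y) ≤ r0 (x + y) ∧
      min (w0 x) (w0 y) ≤ w0 (x + y) ∧ rh0 (x + y) ≤ max (rh0 x) (rh0 y) ∧
      wh0 (x + y) ≤ max (wh0 x) (wh0 y))
    (hA0smul : ∀ (a : K), ∀ x ∈ V0, r0 x ≤ r0 (a • x) ∧ w0 x ≤ w0 (a • x) ∧
      rh0 (a • x) ≤ rh0 x ∧ wh0 (a • x) ≤ wh0 x)
    (hA0zero : r0 0 = 1 ∧ w0 0 = 1 ∧ rh0 0 = 0 ∧ wh0 0 = 0)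
    -- `A₁` is a CIF vector subspace of `V₁`:
    (hA1add : ∀ x ∈ V1, ∀ y ∈ V1, min (r1 x) (r1 y) ≤ r1 (x + y) ∧
      min (w1 x) (w1 y) ≤ w1 (x + y) ∧ rh1 (x + y) ≤ max (rh1 x) (rh1 y) ∧
      wh1 (x + y) ≤ max (wh1 x) (wh1 y))
    (hA1smul : ∀ (a : K), ∀ x ∈ V1, r1 x ≤ r1 (a • x) ∧ w1 x ≤ w1 (a • x) ∧
      rh1 (a • x) ≤ rh1 x ∧ wh1 (a • x) ≤ wh1 x)
    (hA1zero : r1 0 = 1 ∧ w1 0 = 1 ∧ rh1 0 = 0 ∧ wh1 0 = 0)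
    -- `A` is the sum of the extensions `𝔞₀, 𝔞₁`:
    (rA wA rhA whA : V → ℝ)
    (hrA : ∀ x, rA x = sumSup (fun z => if z ∈ V0 then r0 z else 0)
      (fun z => if z ∈ V1 then r1 z else 0) x)
    (hwA : ∀ x, wA x = sumSup (fun z => if z ∈ V0 then w0 z else 0)
      (fun z => if z ∈ V1 then w1 z else 0) x)
    (hrhA : ∀ x, rhA x = sumInf (fun z => if z ∈ V0 then rh0 z else 1)
      (fun z => if z ∈ V1 then rh1 z else 1) x)
    (hwhA : ∀ x, whA x = sumInf (fun z => if z ∈ V0 then wh0 z else 1)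
      (fun z => if z ∈ V1 then wh1 z else 1) x)
    -- the sum is direct: `𝔞₀ ∩ 𝔞₁ = (0,1)` away from `0`:
    (hdisj : ∀ x : V, x ≠ 0 →
      min (if x ∈ V0 then r0 x else 0) (if x ∈ V1 then r1 x else 0) = 0 ∧
      min (if x ∈ V0 then w0 x else 0) (if x ∈ V1 then w1 x else 0) = 0 ∧
      max (if x ∈ V0 then rh0 x else 1) (if x ∈ V1 then rh1 x else 1) = 1 ∧
      max (if x ∈ V0 then wh0 x else 1) (if x ∈ V1 then wh1 x else 1) = 1) :
    ∀ x0 ∈ V0, ∀ x1 ∈ V1,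
      rA (x0 + x1) = min (r0 x0) (r1 x1) ∧ wA (x0 + x1) = min (w0 x0) (w1 x1) := by
  intro x0 hx0 x1 hx1
  have key : ∀ (f0 f1 : V → ℝ),
      (∀ x, f0 x ∈ Set.Icc (0:ℝ) 1) → (∀ x, f1 x ∈ Set.Icc (0:ℝ) 1) →
      sumSup (fun z => if z ∈ V0 then f0 z else 0)
        (fun z => if z ∈ V1 then f1 z else 0) (x0 + x1) = min (f0 x0) (f1 x1) := by
    intro f0 f1 h0 h1
    apply le_antisymm
    · apply Real.sSup_le
      · rintro t ⟨a, b, hab, rfl⟩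
        by_cases ha : a ∈ V0
        · by_cases hbb : b ∈ V1
          · obtain ⟨p, hp, hup⟩ := hdir (x0 + x1)
            have e1 := hup (⟨a, ha⟩, ⟨b, hbb⟩) hab.symm
            have e2 := hup (⟨x0, hx0⟩, ⟨x1, hx1⟩) rfl
            have heq : ((⟨a, ha⟩, ⟨b, hbb⟩) : V0 × V1) = (⟨x0, hx0⟩, ⟨x1, hx1⟩) :=
              e1.trans e2.symm
            have h3 : a = x0 := congrArg (fun q : V0 × V1 => (q.1 : V)) heq
            have h4 : b = x1 := congrArg (fun q : V0 × V1 => (q.2 : V)) heq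
            subst h3; subst h4
            simp [ha, hbb]
          · simp only [hbb, if_neg, if_false]
            exact le_trans (min_le_right _ _) (le_min (h0 x0).1 (h1 x1).1)
        · simp only [ha, if_neg, if_false]
          exact le_trans (min_le_left _ _) (le_min (h0 x0).1 (h1 x1).1)
      · exact le_min (h0 x0).1 (h1 x1).1
    · apply le_csSup
      · refine ⟨1, ?_⟩
        rintro t ⟨a, b, hab, rfl⟩
        refine (min_le_left _ _).trans ?_
        by_cases ha : a ∈ V0
        · simpa [ha] using (h0 a).2
        · simp [ha]
      · exact ⟨x0, x1, rfl, by simp [hx0, hx1]⟩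
  constructor
  · rw [hrA]
    exact key r0 r1 (fun x => (hb x).1) (fun x => (hb x).2.2.2.2.1)
  · rw [hwA]
    exact key w0 w1 (fun x => (hb x).2.1) (fun x => (hb x).2.2.2.2.2.1)
end
end
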